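/- arXiv:1301.6379 — 12 statements merged into one kernel-verified Lean document; each statement's English description precedes it below -/
import Mathlib

section
/- Let $a<b$ and let $R=(A_1,A_2,B_1,B_2):(a,b)\to\mathbb{R}^4$ be a differentiable curve with $A_2(t)\neq 0$, $B_1(t)\neq 0$, $B_2(t)\neq 0$ for all $t\in(a,b)$, satisfying the system $A_1'=\tfrac12(A_1^2/A_2^2-A_1^2/B_2^2)$, $A_2'=\tfrac12((B_2^2-A_2^2+B_1^2)/(B_1B_2)-A_1/A_2)$, $B_1'=(A_2^2+B_2^2-B_1^2)/(A_2B_2)$, $B_2'=\tfrac12((A_2^2-B_2^2+B_1^2)/(A_2B_1)+A_1/B_2)$. Then the function $F(t)=2A_1(t)A_2(t)B_2(t)-B_1(t)(B_2(t)^2-A_2(t)^2)$ is constant on $(a,b)$. -/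
/-- First component of the vector field `V` (right-hand side of system (2)). -/
noncomputable def V1 (a1 a2 _a3 a4 : ℝ) : ℝ := 1/2 * (a1^2/a2^2 - a1^2/a4^2)

/-- Second component of the vector field `V`. -/
noncomputable def V2 (a1 a2 a3 a4 : ℝ) : ℝ :=
  1/2 * ((a4^2 - a2^2 + a3^2)/(a3*a4) - a1/a2)

/-- Third component of the vector field `V`. -/
noncomputable def V3 (_a1 a2 a3 a4 : ℝ) : ℝ := (a2^2 + a4^2 - a3^2)/(a2*a4)

/-- Fourth component of the vector field `V`. -/
noncomputable def V4 (a1 a2 a3 a4 : ℝ) : ℝ :=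
  1/2 * ((a2^2 - a4^2 + a3^2)/(a2*a3) + a1/a4)

/-- Euclidean inner product `⟨V(S), S⟩`. -/
noncomputable def ipVS (a1 a2 a3 a4 : ℝ) : ℝ :=
  V1 a1 a2 a3 a4 * a1 + V2 a1 a2 a3 a4 * a2 +
  V3 a1 a2 a3 a4 * a3 + V4 a1 a2 a3 a4 * a4

/-- Components of the tangential vector field `W(S) = V(S) - ⟨V(S),S⟩ S`. -/
noncomputable def W1 (a1 a2 a3 a4 : ℝ) : ℝ := V1 a1 a2 a3 a4 - ipVS a1 a2 a3 a4 * a1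
noncomputable def W2 (a1 a2 a3 a4 : ℝ) : ℝ := V2 a1 a2 a3 a4 - ipVS a1 a2 a3 a4 * a2
noncomputable def W3 (a1 a2 a3 a4 : ℝ) : ℝ := V3 a1 a2 a3 a4 - ipVS a1 a2 a3 a4 * a3
noncomputable def W4 (a1 a2 a3 a4 : ℝ) : ℝ := V4 a1 a2 a3 a4 - ipVS a1 a2 a3 a4 * a4

/-- The vector field `V` on `ℝ⁴` (as a quadruple). -/
noncomputable def Vv (S : ℝ × ℝ × ℝ × ℝ) : ℝ × ℝ × ℝ × ℝ :=
  (V1 S.1 S.2.1 S.2.2.1 S.2.2.2, V2 S.1 S.2.1 S.2.2.1 S.2.2.2,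
   V3 S.1 S.2.1 S.2.2.1 S.2.2.2, V4 S.1 S.2.1 S.2.2.1 S.2.2.2)

/-- The vector field `W` on `ℝ⁴` (as a quadruple). -/
noncomputable def Wv (S : ℝ × ℝ × ℝ × ℝ) : ℝ × ℝ × ℝ × ℝ :=
  (W1 S.1 S.2.1 S.2.2.1 S.2.2.2, W2 S.1 S.2.1 S.2.2.1 S.2.2.2,
   W3 S.1 S.2.1 S.2.2.1 S.2.2.2, W4 S.1 S.2.1 S.2.2.1 S.2.2.2)

/-- Euclidean inner product `⟨V(S),S⟩` in quadruple form. -/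
noncomputable def ipv (S : ℝ × ℝ × ℝ × ℝ) : ℝ :=
  ipVS S.1 S.2.1 S.2.2.1 S.2.2.2

private lemma keyzero (a1 a2 a3 a4 : ℝ) (h2 : a2 ≠ 0) (h3 : a3 ≠ 0) (h4 : a4 ≠ 0) :
    2 * (1/2 * (a1^2/a2^2 - a1^2/a4^2)) * a2 * a4
      + 2 * a1 * (1/2 * ((a4^2 - a2^2 + a3^2)/(a3*a4) - a1/a2)) * a4
      + 2 * a1 * a2 * (1/2 * ((a2^2 - a4^2 + a3^2)/(a2*a3) + a1/a4))
      - ((a2^2 + a4^2 - a3^2)/(a2*a4)) * (a4^2 - a2^2)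
      - a3 * (2 * a4 * (1/2 * ((a2^2 - a4^2 + a3^2)/(a2*a3) + a1/a4))
              - 2 * a2 * (1/2 * ((a4^2 - a2^2 + a3^2)/(a3*a4) - a1/a2))) = 0 := by
  field_simp
  ring

/-- Along any solution of system (2) on an interval, the function
`F(t) = 2 A₁ A₂ B₂ - B₁ (B₂² - A₂²)` is constant. -/
theorem statement0 (a b : ℝ) (hab : a < b) (A1f A2f B1f B2f : ℝ → ℝ)
    (hA2 : ∀ t ∈ Set.Ioo a b, A2f t ≠ 0)
    (hB1 : ∀ t ∈ Set.Ioo a b, B1f t ≠ 0)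
    (hB2 : ∀ t ∈ Set.Ioo a b, B2f t ≠ 0)
    (hd1 : ∀ t ∈ Set.Ioo a b, HasDerivAt A1f (V1 (A1f t) (A2f t) (B1f t) (B2f t)) t)
    (hd2 : ∀ t ∈ Set.Ioo a b, HasDerivAt A2f (V2 (A1f t) (A2f t) (B1f t) (B2f t)) t)
    (hd3 : ∀ t ∈ Set.Ioo a b, HasDerivAt B1f (V3 (A1f t) (A2f t) (B1f t) (B2f t)) t)
    (hd4 : ∀ t ∈ Set.Ioo a b, HasDerivAt B2f (V4 (A1f t) (A2f t) (B1f t) (B2f t)) t) :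
    ∀ t1 ∈ Set.Ioo a b, ∀ t2 ∈ Set.Ioo a b,
      2 * A1f t1 * A2f t1 * B2f t1 - B1f t1 * ((B2f t1)^2 - (A2f t1)^2) =
      2 * A1f t2 * A2f t2 * B2f t2 - B1f t2 * ((B2f t2)^2 - (A2f t2)^2) := by
  set F : ℝ → ℝ := fun t => 2 * A1f t * A2f t * B2f t - B1f t * ((B2f t)^2 - (A2f t)^2)
    with hFdef
  have hF : ∀ t ∈ Set.Ioo a b, HasDerivAt F 0 t := by
    intro t ht
    have h1 := hd1 t ht
    have h2 := hd2 t ht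
    have h3 := hd3 t ht
    have h4 := hd4 t ht
    have hP : HasDerivAt (fun t => 2 * A1f t * A2f t * B2f t)
        (((0 * A1f t + 2 * V1 (A1f t) (A2f t) (B1f t) (B2f t)) * A2f t
            + 2 * A1f t * V2 (A1f t) (A2f t) (B1f t) (B2f t)) * B2f t
          + 2 * A1f t * A2f t * V4 (A1f t) (A2f t) (B1f t) (B2f t)) t :=
      (((hasDerivAt_const t 2).mul h1).mul h2).mul h4
    have hQ : HasDerivAt (fun t => B1f t * ((B2f t)^2 - (A2f t)^2))
        (V3 (A1f t) (A2f t) (B1f t) (B2f t) * ((B2f t)^2 - (A2f t)^2)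
          + B1f t * ((↑(2:ℕ) * B2f t ^ 1 * V4 (A1f t) (A2f t) (B1f t) (B2f t))
            - (↑(2:ℕ) * A2f t ^ 1 * V2 (A1f t) (A2f t) (B1f t) (B2f t)))) t :=
      h3.mul ((h4.pow 2).sub (h2.pow 2))
    have hPQ := hP.sub hQ
    convert hPQ using 1
    · rfl
    · rfl
    · rfl
    have h0 := keyzero (A1f t) (A2f t) (B1f t) (B2f t) (hA2 t ht) (hB1 t ht) (hB2 t ht)
    simp only [V1, V2, V3, V4]
    push_cast
    linear_combination -h0
  have main : ∀ t1 ∈ Set.Ioo a b, ∀ t2 ∈ Set.Ioo a b, t1 < t2 → F t1 = F t2 := by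
    intro t1 ht1 t2 ht2 hlt
    have hsub : Set.Icc t1 t2 ⊆ Set.Ioo a b := fun x hx =>
      ⟨lt_of_lt_of_le ht1.1 hx.1, lt_of_le_of_lt hx.2 ht2.2⟩
    have := constant_of_has_deriv_right_zero (f := F) (a := t1) (b := t2)
      (fun x hx => ((hF x (hsub hx)).continuousAt).continuousWithinAt)
      (fun x hx => ((hF x (hsub ⟨hx.1, le_of_lt hx.2⟩)).hasDerivWithinAt))
    exact (this t2 ⟨le_of_lt hlt, le_refl _⟩).symm
  intro t1 ht1 t2 ht2
  rcases lt_trichotomy t1 t2 with h | h | h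
  · exact main t1 ht1 t2 ht2 h
  · rw [h]
  · exact (main t2 ht2 t1 ht1 h).symm
end

section
/- Let $S=(\alpha_1,\alpha_2,\alpha_3,\alpha_4)\in\mathbb{R}^4$ with $|S|=1$, $\alpha_1=0$, and $\alpha_2,\alpha_3,\alpha_4\neq 0$. Then $\dfrac{W_2(S)}{\alpha_2}-\dfrac{W_4(S)}{\alpha_4}=\dfrac{\alpha_4^2-\alpha_2^2}{\alpha_2\alpha_3\alpha_4}$; equivalently, along any solution of $S'=W(S)$ lying in the invariant set $\{\alpha_1=0\}$, one has $\frac{d}{du}\ln(\alpha_2/\alpha_4)=(\alpha_4^2-\alpha_2^2)/(\alpha_2\alpha_3\alpha_4)$. -/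
/-- Relation 4) of Lemma 8, pointwise form: at a unit vector with
`α₁ = 0` and `α₂, α₃, α₄ ≠ 0`, we have
`W₂/α₂ - W₄/α₄ = (α₄² - α₂²) / (α₂α₃α₄)`. -/
theorem statement3 (a1 a2 a3 a4 : ℝ)
    (hnorm : a1^2 + a2^2 + a3^2 + a4^2 = 1)
    (h1 : a1 = 0) (h2 : a2 ≠ 0) (h3 : a3 ≠ 0) (h4 : a4 ≠ 0) :
    W2 a1 a2 a3 a4 / a2 - W4 a1 a2 a3 a4 / a4 = (a4^2 - a2^2) / (a2 * a3 * a4) := by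
  subst h1
  simp only [W2, W4, V1, V2, V3, V4, ipVS]
  field_simp
  ring
end

section
/- Let $S=(\alpha_1,\alpha_2,\alpha_3,\alpha_4)\in\mathbb{R}^4$ with $|S|=1$, $\alpha_1=0$, $\alpha_2=\alpha_4\neq 0$ and $\alpha_3\neq 0$. Then $\dfrac{W_3(S)}{\alpha_4}-\dfrac{\alpha_3 W_4(S)}{\alpha_4^2}=\dfrac{3}{2\alpha_4}\left(\dfrac{2}{\sqrt3}+\dfrac{\alpha_3}{\alpha_4}\right)\left(\dfrac{2}{\sqrt3}-\dfrac{\alpha_3}{\alpha_4}\right)$; equivalently, along any solution of $S'=W(S)$ lying in the invariant set $\{\alpha_1=0,\ \alpha_2=\alpha_4\}$, one has $\frac{d}{du}(\alpha_3/\alpha_4)=\frac{3}{2\alpha_4}(\frac{2}{\sqrt3}+\frac{\alpha_3}{\alpha_4})(\frac{2}{\sqrt3}-\frac{\alpha_3}{\alpha_4})$. -/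
/-- Relation 5) of Lemma 8, pointwise form: at a unit vector with
`α₁ = 0`, `α₂ = α₄ ≠ 0` and `α₃ ≠ 0`, we have
`W₃/α₄ - α₃ W₄/α₄² = (3/(2α₄)) (2/√3 + α₃/α₄)(2/√3 - α₃/α₄)`. -/
theorem statement4 (a1 a2 a3 a4 : ℝ)
    (hnorm : a1^2 + a2^2 + a3^2 + a4^2 = 1)
    (h1 : a1 = 0) (h24 : a2 = a4) (h4 : a4 ≠ 0) (h3 : a3 ≠ 0) :
    W3 a1 a2 a3 a4 / a4 - a3 * W4 a1 a2 a3 a4 / a4^2 =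
      3 / (2 * a4) * (2 / Real.sqrt 3 + a3 / a4) * (2 / Real.sqrt 3 - a3 / a4) := by
  subst h1 h24
  have hs3 : Real.sqrt 3 ≠ 0 := by positivity
  have hsq : Real.sqrt 3 * Real.sqrt 3 = 3 := Real.mul_self_sqrt (by norm_num)
  have hn : a2^2 = (1 - a3^2)/2 := by linarith
  have key : (2 / Real.sqrt 3)^2 = 4/3 := by
    rw [div_pow, Real.sq_sqrt] <;> norm_num
  rw [show 3 / (2 * a2) * (2 / Real.sqrt 3 + a3 / a2) * (2 / Real.sqrt 3 - a3 / a2)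
      = 3 / (2 * a2) * ((2 / Real.sqrt 3)^2 - (a3 / a2)^2) by ring, key]
  simp only [W3, W4, V1, V2, V3, V4, ipVS]
  field_simp
  ring_nf
end

section
/- Let $S=(\alpha_1,\alpha_2,\alpha_3,\alpha_4)\in\mathbb{R}^4$ satisfy $|S|=1$, $\alpha_1\geq 0$, $\alpha_2>0$, $\alpha_3>0$, $\alpha_4>0$ and $\alpha_2\leq\alpha_4$. Then $W(S)=0$ if and only if $S=\left(\tfrac{1}{2\sqrt2},\tfrac{1}{2\sqrt2},\tfrac{\sqrt3}{2\sqrt2},\tfrac{\sqrt3}{2\sqrt2}\right)$ or $S=\left(0,\tfrac{\sqrt3}{\sqrt{10}},\tfrac{\sqrt2}{\sqrt5},\tfrac{\sqrt3}{\sqrt{10}}\right)$. -/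
/-- Helper: nonneg reals with equal squares are equal. -/
lemma sqEqAux {x y : ℝ} (hx : 0 ≤ x) (hy : 0 ≤ y) (h : x^2 = y^2) : x = y := by
  rw [← Real.sqrt_sq hx, ← Real.sqrt_sq hy, h]

lemma wzero1 (b r : ℝ) (hb0 : b ≠ 0) (hr0 : r ≠ 0) (hb : b^2 = 1/8) (hr : r^2 = 3) :
    W1 b b (r*b) (r*b) = 0 ∧ W2 b b (r*b) (r*b) = 0 ∧
    W3 b b (r*b) (r*b) = 0 ∧ W4 b b (r*b) (r*b) = 0 := by
  have hv1 : V1 b b (r*b) (r*b) = 1/3 := by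
    rw [V1]; field_simp; linear_combination hr
  have hv2 : V2 b b (r*b) (r*b) = 1/3 := by
    rw [V2]; field_simp; linear_combination hr
  have hv3 : V3 b b (r*b) (r*b) = 1/r := by rw [V3]; field_simp; ring
  have hv4 : V4 b b (r*b) (r*b) = 1/r := by rw [V4]; field_simp; ring
  have hip : ipVS b b (r*b) (r*b) = 8/3*b := by
    rw [ipVS, hv1, hv2, hv3, hv4]; field_simp; ring
  refine ⟨?_, ?_, ?_, ?_⟩
  · rw [W1, hv1, hip]; linear_combination (-8/3 : ℝ)*hb
  · rw [W2, hv2, hip]; linear_combination (-8/3 : ℝ)*hb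
  · rw [W3, hv3, hip]; field_simp; linear_combination (-8*r^2)*hb - hr
  · rw [W4, hv4, hip]; field_simp; linear_combination (-8*r^2)*hb - hr

lemma wzero2 (b c : ℝ) (hb0 : b ≠ 0) (hc0 : c ≠ 0) (hb : b^2 = 3/10) (hc : c^2 = 2/5) :
    W1 0 b c b = 0 ∧ W2 0 b c b = 0 ∧ W3 0 b c b = 0 ∧ W4 0 b c b = 0 := by
  have hv1 : V1 0 b c b = 0 := by rw [V1]; norm_num
  have hv2 : V2 0 b c b = c/(2*b) := by rw [V2]; field_simp; ring
  have hv3 : V3 0 b c b = (2*b^2 - c^2)/b^2 := by rw [V3]; field_simp; ring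
  have hv4 : V4 0 b c b = c/(2*b) := by rw [V4]; field_simp; ring
  have hip : ipVS 0 b c b = 5/3*c := by
    rw [ipVS, hv1, hv2, hv3, hv4]; field_simp; linear_combination (8*c)*hb - (6*c)*hc
  refine ⟨?_, ?_, ?_, ?_⟩
  · rw [W1, hv1, hip]; ring
  · rw [W2, hv2, hip]; field_simp; linear_combination (-10*c)*hb
  · rw [W3, hv3, hip]; field_simp; linear_combination (6-5*c^2)*hb - (9/2)*hc
  · rw [W4, hv4, hip]; field_simp; linear_combination (-10*c)*hb
/-- Lemma 5: on the part of the unit sphere where `α₁ ≥ 0`,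
`α₂, α₃, α₄ > 0` and `α₂ ≤ α₄`, the zeros of `W` are exactly the two points
`(1/(2√2), 1/(2√2), √3/(2√2), √3/(2√2))` and `(0, √3/√10, √2/√5, √3/√10)`. -/
theorem statement5 (a1 a2 a3 a4 : ℝ)
    (hnorm : a1^2 + a2^2 + a3^2 + a4^2 = 1)
    (h1 : 0 ≤ a1) (h2 : 0 < a2) (h3 : 0 < a3) (h4 : 0 < a4) (h24 : a2 ≤ a4) :
    (W1 a1 a2 a3 a4 = 0 ∧ W2 a1 a2 a3 a4 = 0 ∧
     W3 a1 a2 a3 a4 = 0 ∧ W4 a1 a2 a3 a4 = 0) ↔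
    ((a1, a2, a3, a4) = (1 / (2 * Real.sqrt 2), 1 / (2 * Real.sqrt 2),
        Real.sqrt 3 / (2 * Real.sqrt 2), Real.sqrt 3 / (2 * Real.sqrt 2)) ∨
     (a1, a2, a3, a4) = ((0 : ℝ), Real.sqrt 3 / Real.sqrt 10,
        Real.sqrt 2 / Real.sqrt 5, Real.sqrt 3 / Real.sqrt 10)) := by
  have s2 : Real.sqrt 2 ^ 2 = 2 := Real.sq_sqrt (by norm_num)
  have s3 : Real.sqrt 3 ^ 2 = 3 := Real.sq_sqrt (by norm_num)
  have s5 : Real.sqrt 5 ^ 2 = 5 := Real.sq_sqrt (by norm_num)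
  have s10 : Real.sqrt 10 ^ 2 = 10 := Real.sq_sqrt (by norm_num)
  have s2p : (0:ℝ) < Real.sqrt 2 := Real.sqrt_pos.mpr (by norm_num)
  have s3p : (0:ℝ) < Real.sqrt 3 := Real.sqrt_pos.mpr (by norm_num)
  have s5p : (0:ℝ) < Real.sqrt 5 := Real.sqrt_pos.mpr (by norm_num)
  have s10p : (0:ℝ) < Real.sqrt 10 := Real.sqrt_pos.mpr (by norm_num)
  have k1 : (1/(2*Real.sqrt 2))^2 = 1/8 := by
    rw [div_pow, mul_pow, s2]; norm_num
  have k3 : (Real.sqrt 3/(2*Real.sqrt 2))^2 = 3/8 := by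
    rw [div_pow, mul_pow, s2, s3]; norm_num
  have q1 : (Real.sqrt 3/Real.sqrt 10)^2 = 3/10 := by rw [div_pow, s3, s10]
  have q2 : (Real.sqrt 2/Real.sqrt 5)^2 = 2/5 := by rw [div_pow, s2, s5]
  constructor
  · rintro ⟨hw1, hw2, hw3, hw4⟩
    have hv1 : V1 a1 a2 a3 a4 = ipVS a1 a2 a3 a4 * a1 := by rw [W1] at hw1; linarith
    have hv2 : V2 a1 a2 a3 a4 = ipVS a1 a2 a3 a4 * a2 := by rw [W2] at hw2; linarith
    have hv3 : V3 a1 a2 a3 a4 = ipVS a1 a2 a3 a4 * a3 := by rw [W3] at hw3; linarith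
    have hv4 : V4 a1 a2 a3 a4 = ipVS a1 a2 a3 a4 * a4 := by rw [W4] at hw4; linarith
    set t := ipVS a1 a2 a3 a4 with ht
    rw [V1] at hv1; rw [V2] at hv2; rw [V3] at hv3; rw [V4] at hv4
    have n2 := h2.ne'
    have n3 := h3.ne'
    have n4 := h4.ne'
    field_simp at hv1 hv2 hv3 hv4
    -- hv1 : a1 ^ 2 * a4 ^ 2 - a2 ^ 2 * a1 ^ 2 = t * a1 * (2 * (a2 ^ 2 * a4 ^ 2))
    -- hv2 : (a4 ^ 2 - a2 ^ 2 + a3 ^ 2) * a2 - a3 * a4 * a1 = t * a2 * (2 * (a3 * a4 * a2))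
    -- hv3 : a2 ^ 2 + a4 ^ 2 - a3 ^ 2 = t * a3 * (a2 * a4)
    -- hv4 : (a2 ^ 2 - a4 ^ 2 + a3 ^ 2) * a4 + a1 * (a2 * a3) = t * a4 * (2 * (a2 * a3 * a4))
    have A : a1*a3*(a2^2+a4^2) = 2*a2*a4*(a4^2-a2^2) := by
      linear_combination a2*hv4 - a4*hv2
    have F : 3*a3^2*(a2^2+a4^2) = 2*(a2^2+a4^2)^2 + (a4^2-a2^2)^2 := by
      linear_combination a2*hv2 + a4*hv4 - 2*(a2^2+a4^2)*hv3
    rcases eq_or_lt_of_le h1 with h1z | h1p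
    · -- a1 = 0 : second solution
      have h1z' : a1 = 0 := h1z.symm
      subst h1z'
      have hq : a4^2 - a2^2 = 0 := by
        have hA : 2*a2*a4*(a4^2 - a2^2) = 0 := by linear_combination -A
        have hne : (2*a2*a4 : ℝ) ≠ 0 := by positivity
        exact (mul_eq_zero.mp hA).resolve_left hne
      have h42 : a4 = a2 := by
        apply sqEqAux h4.le h2.le; linarith
      rw [h42] at F hnorm
      have hc2 : a3^2 = 4/3*a2^2 := by
        have hm : a3^2*(6*a2^2) = (4/3*a2^2)*(6*a2^2) := by linear_combination F
        exact mul_right_cancel₀ (by positivity) hm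
      have hb2 : a2^2 = 3/10 := by linarith [hnorm, hc2]
      have hc2' : a3^2 = 2/5 := by linarith
      right
      have e2 : a2 = Real.sqrt 3/Real.sqrt 10 := by
        apply sqEqAux h2.le (by positivity); rw [q1, hb2]
      have e3 : a3 = Real.sqrt 2/Real.sqrt 5 := by
        apply sqEqAux h3.le (by positivity); rw [q2, hc2']
      rw [h42, e2, e3]
    · -- a1 > 0 : first solution
      have n1 : a1 ≠ 0 := h1p.ne'
      have C : a1*(a4^2-a2^2) = 2*t*a2^2*a4^2 := by
        apply mul_left_cancel₀ n1; linear_combination hv1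
      have G : a1*a3*a2*a4*(a4^2-a2^2) = 2*a2^2*a4^2*(a2^2+a4^2-a3^2) := by
        linear_combination (a2*a3*a4)*C - (2*a2^2*a4^2)*hv3
      have H : (a4^2-a2^2)^2 = (a2^2+a4^2)*(a2^2+a4^2-a3^2) := by
        have hm : (2*a2^2*a4^2)*((a4^2-a2^2)^2)
            = (2*a2^2*a4^2)*((a2^2+a4^2)*(a2^2+a4^2-a3^2)) := by
          linear_combination -(a2*a4*(a4^2-a2^2))*A + (a2^2+a4^2)*G
        exact mul_left_cancel₀ (by positivity) hm
      have s2q : (a2^2+a4^2)^2 = (2*(a4^2-a2^2))^2 := by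
        linear_combination F - 3*H
      have hs : a2^2 + a4^2 = 2*(a4^2-a2^2) := by
        have h24sq : a2^2 ≤ a4^2 := pow_le_pow_left₀ h2.le h24 2
        exact sqEqAux (by positivity) (by linarith) s2q
      have hd2 : a4^2 = 3*a2^2 := by linarith
      have hc2 : a3^2 = 3*a2^2 := by
        have hm : a3^2*(4*a2^2) = (3*a2^2)*(4*a2^2) := by
          linear_combination H - (a3^2 - 4*a2^2)*hd2
        exact mul_right_cancel₀ (by positivity) hm
      have hxc : a1*a3 = a2*a4 := by
        have hm : (a1*a3)*(4*a2^2) = (a2*a4)*(4*a2^2) := by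
          linear_combination A - (a1*a3 - 2*a2*a4)*hd2
        exact mul_right_cancel₀ (by positivity) hm
      have hcd : a3 = a4 := by
        apply sqEqAux h3.le h4.le; linarith
      have h12 : a1 = a2 := by
        rw [← hcd] at hxc
        exact mul_right_cancel₀ n3 hxc
      have hb2 : a2^2 = 1/8 := by
        rw [h12] at hnorm; linarith [hc2, hd2]
      left
      have e2 : a2 = 1/(2*Real.sqrt 2) := by
        apply sqEqAux h2.le (by positivity); rw [k1, hb2]
      have e1 : a1 = 1/(2*Real.sqrt 2) := by rw [h12, e2]
      have e3 : a3 = Real.sqrt 3/(2*Real.sqrt 2) := by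
        apply sqEqAux h3.le (by positivity); rw [k3, hc2, hb2]; ring
      have e4 : a4 = Real.sqrt 3/(2*Real.sqrt 2) := by
        apply sqEqAux h4.le (by positivity); rw [k3, hd2, hb2]; ring
      rw [e1, e2, e3, e4]
  · rintro (h | h) <;>
      rw [Prod.mk.injEq, Prod.mk.injEq, Prod.mk.injEq] at h <;>
      obtain ⟨e1, e2, e3, e4⟩ := h <;> subst e1 <;> subst e2 <;> subst e3 <;> subst e4
    · have hmul : Real.sqrt 3/(2*Real.sqrt 2) = Real.sqrt 3 * (1/(2*Real.sqrt 2)) := by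
        ring
      rw [hmul]
      exact wzero1 _ _ (by positivity) s3p.ne' k1 s3
    · exact wzero2 _ _ (by positivity) (by positivity) q1 q2
end

section
/- Define the linear maps on $\mathbb{R}^4$: $\sigma_1(\alpha_1,\alpha_2,\alpha_3,\alpha_4)=(-\alpha_1,\alpha_4,\alpha_3,\alpha_2)$, $\sigma_4(\alpha_1,\alpha_2,\alpha_3,\alpha_4)=(\alpha_1,\alpha_2,-\alpha_3,-\alpha_4)$, $\sigma_5(\alpha_1,\alpha_2,\alpha_3,\alpha_4)=(\alpha_1,-\alpha_2,-\alpha_3,\alpha_4)$, $\tau_2(\alpha_1,\alpha_2,\alpha_3,\alpha_4)=(-\alpha_1,\alpha_2,\alpha_3,-\alpha_4)$, $\tau_3(\alpha_1,\alpha_2,\alpha_3,\alpha_4)=(-\alpha_1,-\alpha_2,\alpha_3,\alpha_4)$. Then for every $S=(\alpha_1,\alpha_2,\alpha_3,\alpha_4)\in\mathbb{R}^4$ with $\alpha_2\alpha_3\alpha_4\neq 0$ one has $V(\sigma_1(S))=\sigma_1(V(S))$, $V(\sigma_4(S))=\sigma_4(V(S))$, $V(\sigma_5(S))=\sigma_5(V(S))$,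 $V(\tau_2(S))=-\tau_2(V(S))$, and $V(\tau_3(S))=-\tau_3(V(S))$. Consequently $\sigma_1,\sigma_4,\sigma_5$ map solutions of $dR/dt=V(R)$ to solutions, while $\tau_2,\tau_3$ map solutions to solutions after time reversal $t\mapsto -t$. -/
/-- The symmetry `σ₁(α₁,α₂,α₃,α₄) = (-α₁,α₄,α₃,α₂)`. -/
def sig1 (S : ℝ × ℝ × ℝ × ℝ) : ℝ × ℝ × ℝ × ℝ := (-S.1, S.2.2.2, S.2.2.1, S.2.1)

/-- The symmetry `σ₄(α₁,α₂,α₃,α₄) = (α₁,α₂,-α₃,-α₄)`. -/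
def sig4 (S : ℝ × ℝ × ℝ × ℝ) : ℝ × ℝ × ℝ × ℝ := (S.1, S.2.1, -S.2.2.1, -S.2.2.2)

/-- The symmetry `σ₅(α₁,α₂,α₃,α₄) = (α₁,-α₂,-α₃,α₄)`. -/
def sig5 (S : ℝ × ℝ × ℝ × ℝ) : ℝ × ℝ × ℝ × ℝ := (S.1, -S.2.1, -S.2.2.1, S.2.2.2)

/-- The time-reversing symmetry `τ₂(α₁,α₂,α₃,α₄) = (-α₁,α₂,α₃,-α₄)`. -/
def tau2 (S : ℝ × ℝ × ℝ × ℝ) : ℝ × ℝ × ℝ × ℝ := (-S.1, S.2.1, S.2.2.1, -S.2.2.2)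

/-- The time-reversing symmetry `τ₃(α₁,α₂,α₃,α₄) = (-α₁,-α₂,α₃,α₄)`. -/
def tau3 (S : ℝ × ℝ × ℝ × ℝ) : ℝ × ℝ × ℝ × ℝ := (-S.1, -S.2.1, S.2.2.1, S.2.2.2)

lemma key (S : ℝ × ℝ × ℝ × ℝ) (h2 : S.2.1 ≠ 0) (h3 : S.2.2.1 ≠ 0) (h4 : S.2.2.2 ≠ 0) :
    Vv (sig1 S) = sig1 (Vv S) ∧ Vv (sig4 S) = sig4 (Vv S) ∧
    Vv (sig5 S) = sig5 (Vv S) ∧ Vv (tau2 S) = -(tau2 (Vv S)) ∧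
    Vv (tau3 S) = -(tau3 (Vv S)) := by
  obtain ⟨a1, a2, a3, a4⟩ := S
  simp only [Vv, sig1, sig4, sig5, tau2, tau3, V1, V2, V3, V4, Prod.mk.injEq, Prod.neg_mk,
    Prod.ext_iff] at *
  refine ⟨⟨?_, ?_, ?_, ?_⟩, ⟨?_, ?_, ?_, ?_⟩, ⟨?_, ?_, ?_, ?_⟩, ⟨?_, ?_, ?_, ?_⟩,
    ⟨?_, ?_, ?_, ?_⟩⟩ <;> field_simp <;> ring

/-- Lemma 3: `σ₁, σ₄, σ₅` commute with `V`, while `τ₂, τ₃`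
anticommute with `V`; consequently `σ₁, σ₄, σ₅` map solutions of
`dR/dt = V(R)` to solutions, and `τ₂, τ₃` map solutions to solutions after the
time reversal `t ↦ -t`. -/
theorem statement6 :
    (∀ S : ℝ × ℝ × ℝ × ℝ, S.2.1 ≠ 0 → S.2.2.1 ≠ 0 → S.2.2.2 ≠ 0 →
      Vv (sig1 S) = sig1 (Vv S) ∧ Vv (sig4 S) = sig4 (Vv S) ∧
      Vv (sig5 S) = sig5 (Vv S) ∧ Vv (tau2 S) = -(tau2 (Vv S)) ∧
      Vv (tau3 S) = -(tau3 (Vv S))) ∧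
    (∀ (a b : ℝ) (R : ℝ → ℝ × ℝ × ℝ × ℝ),
      (∀ t ∈ Set.Ioo a b, (R t).2.1 ≠ 0 ∧ (R t).2.2.1 ≠ 0 ∧ (R t).2.2.2 ≠ 0 ∧
        HasDerivAt R (Vv (R t)) t) →
      ((∀ t ∈ Set.Ioo a b,
          HasDerivAt (fun s => sig1 (R s)) (Vv (sig1 (R t))) t ∧
          HasDerivAt (fun s => sig4 (R s)) (Vv (sig4 (R t))) t ∧
          HasDerivAt (fun s => sig5 (R s)) (Vv (sig5 (R t))) t) ∧
       (∀ t : ℝ, -t ∈ Set.Ioo a b →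
          HasDerivAt (fun s => tau2 (R (-s))) (Vv (tau2 (R (-t)))) t ∧
          HasDerivAt (fun s => tau3 (R (-s))) (Vv (tau3 (R (-t)))) t))) := by
  refine ⟨fun S h2 h3 h4 => key S h2 h3 h4, fun a b R hR => ⟨fun t ht => ?_, fun t ht => ?_⟩⟩
  · obtain ⟨h2, h3, h4, hd⟩ := hR t ht
    obtain ⟨k1, k4, k5, -, -⟩ := key (R t) h2 h3 h4
    rw [k1, k4, k5]
    have d1 : HasDerivAt (fun s => (R s).1) (Vv (R t)).1 t := hd.fst
    have d2 : HasDerivAt (fun s => (R s).2.1) (Vv (R t)).2.1 t := hd.snd.fst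
    have d3 : HasDerivAt (fun s => (R s).2.2.1) (Vv (R t)).2.2.1 t := hd.snd.snd.fst
    have d4 : HasDerivAt (fun s => (R s).2.2.2) (Vv (R t)).2.2.2 t := hd.snd.snd.snd
    simp only [sig1, sig4, sig5]
    exact ⟨(d1.neg).prodMk (d4.prodMk (d3.prodMk d2)),
      d1.prodMk (d2.prodMk ((d3.neg).prodMk d4.neg)),
      d1.prodMk ((d2.neg).prodMk ((d3.neg).prodMk d4))⟩
  · obtain ⟨h2, h3, h4, hd⟩ := hR (-t) ht
    obtain ⟨-, -, -, k2, k3⟩ := key (R (-t)) h2 h3 h4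
    rw [k2, k3]
    have hneg : HasDerivAt (fun s : ℝ => R (-s)) ((-1 : ℝ) • Vv (R (-t))) t :=
      hd.scomp t (hasDerivAt_neg t)
    have d1 : HasDerivAt (fun s : ℝ => (R (-s)).1) ((-1 : ℝ) • Vv (R (-t))).1 t := hneg.fst
    have d2 : HasDerivAt (fun s : ℝ => (R (-s)).2.1) ((-1 : ℝ) • Vv (R (-t))).2.1 t := hneg.snd.fst
    have d3 : HasDerivAt (fun s : ℝ => (R (-s)).2.2.1) ((-1 : ℝ) • Vv (R (-t))).2.2.1 t :=
      hneg.snd.snd.fst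
    have d4 : HasDerivAt (fun s : ℝ => (R (-s)).2.2.2) ((-1 : ℝ) • Vv (R (-t))).2.2.2 t :=
      hneg.snd.snd.snd
    simp only [Prod.smul_fst, Prod.smul_snd, smul_eq_mul, neg_one_mul] at d1 d2 d3 d4
    simp only [tau2, tau3, Prod.neg_mk, neg_neg]
    exact ⟨by simpa using (d1.neg).prodMk (d2.prodMk (d3.prodMk d4.neg)),
      by simpa using (d1.neg).prodMk ((d2.neg).prodMk (d3.prodMk d4))⟩
end

section
/- Let $S:(u_0,u_1)\to\mathbb{R}^4$ be differentiable with $|S(u)|=1$ and components $\alpha_2(u),\alpha_3(u),\alpha_4(u)\neq 0$ for all $u$, satisfying $S'(u)=W(S(u))$. Let $f:(u_0,u_1)\to(0,\infty)$ be differentiable with $f'(u)=\langle V(S(u)),S(u)\rangle\,f(u)$, and let $t:(u_0,u_1)\to\mathbb{R}$ satisfy $t'(u)=f(u)$ (so $t$ is a strictly increasing diffeomorphism onto its image, with inverse $u(t)$). Then the curve $R(t):=f(u(t))\,S(u(t))$ satisfies $\dfrac{dR}{dt}=V(R(t))$ on the image of $t$. -/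
theorem V1_smul (c a1 a2 a3 a4 : ℝ) (hc : c ≠ 0) (h2 : a2 ≠ 0) (h4 : a4 ≠ 0) :
    V1 (c*a1) (c*a2) (c*a3) (c*a4) = V1 a1 a2 a3 a4 := by
  simp only [V1]; field_simp

theorem V2_smul (c a1 a2 a3 a4 : ℝ) (hc : c ≠ 0) (h2 : a2 ≠ 0) (h3 : a3 ≠ 0) (h4 : a4 ≠ 0) :
    V2 (c*a1) (c*a2) (c*a3) (c*a4) = V2 a1 a2 a3 a4 := by
  simp only [V2]; field_simp

theorem V3_smul (c a1 a2 a3 a4 : ℝ) (hc : c ≠ 0) (h2 : a2 ≠ 0) (h4 : a4 ≠ 0) :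
    V3 (c*a1) (c*a2) (c*a3) (c*a4) = V3 a1 a2 a3 a4 := by
  simp only [V3]; field_simp

theorem V4_smul (c a1 a2 a3 a4 : ℝ) (hc : c ≠ 0) (h2 : a2 ≠ 0) (h3 : a3 ≠ 0) (h4 : a4 ≠ 0) :
    V4 (c*a1) (c*a2) (c*a3) (c*a4) = V4 a1 a2 a3 a4 := by
  simp only [V4]; field_simp

/-- Key algebraic identity combining the radial and tangential parts. -/
theorem deriv_combine (c : ℝ) (hc : c ≠ 0) (p : ℝ × ℝ × ℝ × ℝ)
    (h2 : p.2.1 ≠ 0) (h3 : p.2.2.1 ≠ 0) (h4 : p.2.2.2 ≠ 0) :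
    c⁻¹ • (c • Wv p + (ipv p * c) • p) = Vv (c • p) := by
  obtain ⟨a1, a2, a3, a4⟩ := p
  simp only at h2 h3 h4
  simp only [Vv, Wv, ipv, Prod.smul_mk, Prod.mk_add_mk, smul_eq_mul, Prod.mk.injEq,
    W1, W2, W3, W4]
  refine ⟨?_, ?_, ?_, ?_⟩
  · rw [V1_smul c a1 a2 a3 a4 hc h2 h4]; field_simp; ring
  · rw [V2_smul c a1 a2 a3 a4 hc h2 h3 h4]; field_simp; ring
  · rw [V3_smul c a1 a2 a3 a4 hc h2 h4]; field_simp; ring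
  · rw [V4_smul c a1 a2 a3 a4 hc h2 h3 h4]; field_simp; ring

/-- splitting into radial and tangential parts. If `S` solves
`S' = W(S)` on the unit sphere, `f > 0` solves `f' = ⟨V(S),S⟩ f`, and `t` is the
(strictly increasing) primitive of `f` with inverse `u`, then
`R(t) = f(u(t)) • S(u(t))` solves `dR/dt = V(R)` on the image of `t`. -/
theorem statement7 (u0 u1 : ℝ) (S : ℝ → ℝ × ℝ × ℝ × ℝ) (f t u : ℝ → ℝ)
    (hnorm : ∀ v ∈ Set.Ioo u0 u1,
      (S v).1^2 + (S v).2.1^2 + (S v).2.2.1^2 + (S v).2.2.2^2 = 1)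
    (h2 : ∀ v ∈ Set.Ioo u0 u1, (S v).2.1 ≠ 0)
    (h3 : ∀ v ∈ Set.Ioo u0 u1, (S v).2.2.1 ≠ 0)
    (h4 : ∀ v ∈ Set.Ioo u0 u1, (S v).2.2.2 ≠ 0)
    (hS : ∀ v ∈ Set.Ioo u0 u1, HasDerivAt S (Wv (S v)) v)
    (hfpos : ∀ v ∈ Set.Ioo u0 u1, 0 < f v)
    (hf : ∀ v ∈ Set.Ioo u0 u1, HasDerivAt f (ipv (S v) * f v) v)
    (ht : ∀ v ∈ Set.Ioo u0 u1, HasDerivAt t (f v) v)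
    (hu : ∀ v ∈ Set.Ioo u0 u1, u (t v) = v) :
    ∀ s ∈ t '' Set.Ioo u0 u1,
      HasDerivAt (fun s => f (u s) • S (u s)) (Vv (f (u s) • S (u s))) s := by
  have htc : ContinuousOn t (Set.Ioo u0 u1) := fun v hv =>
    (ht v hv).continuousAt.continuousWithinAt
  have hmono : StrictMonoOn t (Set.Ioo u0 u1) := by
    apply strictMonoOn_of_hasDerivWithinAt_pos (convex_Ioo u0 u1) htc
    · rw [interior_Ioo]
      exact fun x hx => (ht x hx).hasDerivWithinAt
    · rw [interior_Ioo]
      exact hfpos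
  rintro s ⟨v, hv, rfl⟩
  obtain ⟨hv0, hv1⟩ := hv
  -- key: for any subinterval around v, points near `t v` are in the image
  have key : ∀ a b : ℝ, u0 < a → a < v → v < b → b < u1 →
      ∀ᶠ y in nhds (t v), ∃ w ∈ Set.Ioo a b, t w = y := by
    intro a b ha hav hvb hb
    have hsub : Set.Icc a b ⊆ Set.Ioo u0 u1 :=
      Set.Icc_subset_Ioo ha hb
    have hIVT : Set.Ioo (t a) (t b) ⊆ t '' Set.Ioo a b :=
      intermediate_value_Ioo (le_of_lt (hav.trans hvb)) (htc.mono hsub)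
    have hmem : Set.Ioo (t a) (t b) ∈ nhds (t v) := by
      apply Ioo_mem_nhds
      · exact hmono (hsub ⟨le_refl a, le_of_lt (hav.trans hvb)⟩) ⟨hv0, hv1⟩ hav
      · exact hmono ⟨hv0, hv1⟩ (hsub ⟨le_of_lt (hav.trans hvb), le_refl b⟩) hvb
    filter_upwards [hmem] with y hy
    obtain ⟨w, hw, hwt⟩ := hIVT hy
    exact ⟨w, hw, hwt⟩
  set a := (u0 + v) / 2 with ha_def
  set b := (v + u1) / 2 with hb_def
  have ha0 : u0 < a := by rw [ha_def]; linarith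
  have hav : a < v := by rw [ha_def]; linarith
  have hvb : v < b := by rw [hb_def]; linarith
  have hb1 : b < u1 := by rw [hb_def]; linarith
  have husv : u (t v) = v := hu v ⟨hv0, hv1⟩
  -- eventual right inverse
  have hinv : ∀ᶠ y in nhds (t v), t (u y) = y := by
    filter_upwards [key a b ha0 hav hvb hb1] with y hy
    obtain ⟨w, hw, rfl⟩ := hy
    rw [hu w (Set.Ioo_subset_Ioo (le_of_lt ha0) (le_of_lt hb1) hw)]
  -- continuity of u at t v
  have hcont : ContinuousAt u (t v) := by
    rw [ContinuousAt, husv, Metric.tendsto_nhds]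
    intro ε hε
    set a' := max a (v - ε/2) with ha'
    set b' := min b (v + ε/2) with hb'
    have ha'0 : u0 < a' := lt_of_lt_of_le ha0 (le_max_left _ _)
    have ha'v : a' < v := max_lt hav (by linarith)
    have hvb' : v < b' := lt_min hvb (by linarith)
    have hb'1 : b' < u1 := lt_of_le_of_lt (min_le_left _ _) hb1
    filter_upwards [key a' b' ha'0 ha'v hvb' hb'1] with y hy
    obtain ⟨w, hw, rfl⟩ := hy
    rw [hu w (Set.Ioo_subset_Ioo (le_of_lt ha'0) (le_of_lt hb'1) hw)]
    rw [Real.dist_eq, abs_sub_lt_iff]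
    have h1 : v - ε/2 ≤ a' := le_max_right _ _
    have h2' : b' ≤ v + ε/2 := min_le_right _ _
    constructor <;> [linarith [hw.2]; linarith [hw.1]]
  have hfv : f v ≠ 0 := ne_of_gt (hfpos v ⟨hv0, hv1⟩)
  have hu' : HasDerivAt u (f v)⁻¹ (t v) := by
    apply HasDerivAt.of_local_left_inverse hcont _ hfv hinv
    rw [husv]; exact ht v ⟨hv0, hv1⟩
  -- derivative of the radial-tangential product at v
  have hG : HasDerivAt (fun w => f w • S w)
      (f v • Wv (S v) + (ipv (S v) * f v) • S v) v :=
    (hf v ⟨hv0, hv1⟩).smul (hS v ⟨hv0, hv1⟩)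
  have hcomp : HasDerivAt (fun s => f (u s) • S (u s))
      ((f v)⁻¹ • (f v • Wv (S v) + (ipv (S v) * f v) • S v)) (t v) := by
    have := HasDerivAt.scomp (t v) (by rw [husv]; exact hG) hu'
    exact this
  have heq : (f v)⁻¹ • (f v • Wv (S v) + (ipv (S v) * f v) • S v)
      = Vv (f (u (t v)) • S (u (t v))) := by
    rw [husv]
    exact deriv_combine (f v) hfv (S v) (h2 v ⟨hv0, hv1⟩) (h3 v ⟨hv0, hv1⟩)
      (h4 v ⟨hv0, hv1⟩)
  rw [← heq]
  exact hcomp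
end

section
/- Let $R:(t_0,\infty)\to\mathbb{R}^4$ be a differentiable curve with $R(t)\neq 0$ and components $R_2(t),R_3(t),R_4(t)\neq 0$ for all $t$, satisfying $R'(t)=V(R(t))$. Suppose that $R(t)/|R(t)|\to S^*$ as $t\to\infty$, where $|S^*|=1$, the components $\alpha_2^*,\alpha_3^*,\alpha_4^*$ of $S^*$ are nonzero, and $W(S^*)=0$. Then $R(t)/t\to\langle V(S^*),S^*\rangle\,S^*$ as $t\to\infty$; i.e. the solution is asymptotic to the conic (linear) solution determined by the stationary point $S^*$. -/
/-- The Euclidean norm on `ℝ × ℝ × ℝ × ℝ`. -/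
noncomputable def enorm4 (S : ℝ × ℝ × ℝ × ℝ) : ℝ :=
  Real.sqrt (S.1^2 + S.2.1^2 + S.2.2.1^2 + S.2.2.2^2)

lemma cesaro {E : Type*} [NormedAddCommGroup E] [NormedSpace ℝ E]
    (f : ℝ → E) (f' : ℝ → E) (t0 : ℝ)
    (hd : ∀ t ∈ Set.Ioi t0, HasDerivAt f (f' t) t) (L : E)
    (hf' : Filter.Tendsto f' Filter.atTop (nhds L)) :
    Filter.Tendsto (fun t => t⁻¹ • f t) Filter.atTop (nhds L) := by
  rw [Metric.tendsto_atTop]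
  intro ε hε
  obtain ⟨t1', ht1⟩ := (Metric.tendsto_atTop.1 hf') (ε/4) (by positivity)
  set t1 : ℝ := max (max t1' (t0 + 1)) 0 with ht1def
  set g : ℝ → E := fun t => f t - t • L with hgdef
  have hg : ∀ t ∈ Set.Ici t1, HasDerivWithinAt g (f' t - L) (Set.Ici t1) t := by
    intro t ht
    have h1 : HasDerivAt f (f' t) t := hd t (by
      simp only [Set.mem_Ici] at ht
      have : t0 + 1 ≤ t1 := le_trans (le_max_right _ _) (le_max_left _ _)
      simp only [Set.mem_Ioi]; linarith)
    have h2 : HasDerivAt (fun y : ℝ => y • L) ((1:ℝ) • L) t :=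
      (hasDerivAt_id t).smul_const L
    rw [one_smul] at h2
    exact (h1.sub h2).hasDerivWithinAt
  have bound : ∀ t ∈ Set.Ici t1, ‖f' t - L‖ ≤ ε/4 := by
    intro t ht
    have := ht1 t (le_trans (le_trans (le_max_left _ _) (le_max_left _ _)) ht)
    rw [dist_eq_norm] at this
    linarith
  have key : ∀ t, t1 ≤ t → ‖g t - g t1‖ ≤ ε/4 * (t - t1) := by
    intro t ht
    have := (convex_Ici t1).norm_image_sub_le_of_norm_hasDerivWithin_le hg bound
      Set.self_mem_Ici (Set.mem_Ici.2 ht)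
    rwa [Real.norm_eq_abs, abs_of_nonneg (by linarith)] at this
  obtain ⟨N, hN1, hN2, hN3⟩ : ∃ N : ℝ, t1 ≤ N ∧ 1 ≤ N ∧ 4 * ‖g t1‖ / ε ≤ N :=
    ⟨max t1 (max 1 (4 * ‖g t1‖ / ε)), le_max_left _ _,
      le_trans (le_max_left _ _) (le_max_right _ _),
      le_trans (le_max_right _ _) (le_max_right _ _)⟩
  refine ⟨N, fun t ht => ?_⟩
  have ht1le : t1 ≤ t := le_trans hN1 ht
  have htpos : (0:ℝ) < t := lt_of_lt_of_le one_pos (le_trans hN2 ht)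
  have heq : t⁻¹ • f t - L = t⁻¹ • g t := by
    rw [hgdef]
    simp only [smul_sub, smul_smul, inv_mul_cancel₀ (ne_of_gt htpos), one_smul]
  rw [dist_eq_norm, heq, norm_smul, Real.norm_eq_abs, abs_of_pos (by positivity)]
  have hgt : ‖g t‖ ≤ ‖g t1‖ + ε/4 * (t - t1) := by
    have := key t ht1le
    have := norm_sub_norm_le (g t) (g t1)
    linarith
  have h1 : t⁻¹ * ‖g t‖ ≤ t⁻¹ * (‖g t1‖ + ε/4 * (t - t1)) := by
    apply mul_le_mul_of_nonneg_left hgt (by positivity)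
  have h2 : t⁻¹ * (ε/4 * (t - t1)) ≤ ε/4 := by
    rw [inv_mul_le_iff₀ htpos]
    have ht1nn : 0 ≤ t1 := le_max_right _ _
    nlinarith
  have h3 : t⁻¹ * ‖g t1‖ ≤ ε/4 := by
    rcases le_or_gt ‖g t1‖ 0 with h | h
    · have : t⁻¹ * ‖g t1‖ ≤ 0 := mul_nonpos_of_nonneg_of_nonpos (by positivity) h
      linarith
    · rw [inv_mul_le_iff₀ htpos]
      have : 4 * ‖g t1‖ / ε ≤ t := le_trans hN3 ht
      rw [div_le_iff₀ hε] at this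
      nlinarith
  calc t⁻¹ * ‖g t‖ ≤ t⁻¹ * (‖g t1‖ + ε/4 * (t - t1)) := h1
    _ = t⁻¹ * ‖g t1‖ + t⁻¹ * (ε/4 * (t - t1)) := by ring
    _ ≤ ε/4 + ε/4 := add_le_add h3 h2
    _ < ε := by linarith


lemma enorm4_pos (S : ℝ × ℝ × ℝ × ℝ) (h : S ≠ 0) : 0 < enorm4 S := by
  obtain ⟨a1, a2, a3, a4⟩ := S
  have h' : ¬(a1 = 0 ∧ a2 = 0 ∧ a3 = 0 ∧ a4 = 0) := by
    simpa [Prod.ext_iff] using h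
  have hpos : 0 < a1^2 + a2^2 + a3^2 + a4^2 := by
    rcases not_and_or.1 h' with h1 | h'
    · positivity
    rcases not_and_or.1 h' with h1 | h'
    · positivity
    rcases not_and_or.1 h' with h1 | h1 <;> positivity
  exact Real.sqrt_pos.2 hpos

lemma Vv_smul (c : ℝ) (hc : c ≠ 0) (S : ℝ × ℝ × ℝ × ℝ)
    (h2 : S.2.1 ≠ 0) (h3 : S.2.2.1 ≠ 0) (h4 : S.2.2.2 ≠ 0) :
    Vv (c • S) = Vv S := by
  obtain ⟨a1, a2, a3, a4⟩ := S
  simp only [Prod.smul_mk, smul_eq_mul, Vv, V1, V2, V3, V4] at *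
  refine Prod.ext ?_ (Prod.ext ?_ (Prod.ext ?_ ?_)) <;> simp only [] <;>
    field_simp <;> ring

lemma Vv_continuousAt (S : ℝ × ℝ × ℝ × ℝ)
    (h2 : S.2.1 ≠ 0) (h3 : S.2.2.1 ≠ 0) (h4 : S.2.2.2 ≠ 0) :
    ContinuousAt Vv S := by
  unfold Vv V1 V2 V3 V4
  have e2 : S.2.1^2 ≠ 0 := pow_ne_zero _ h2
  have e4 : S.2.2.2^2 ≠ 0 := pow_ne_zero _ h4
  have e34 : S.2.2.1 * S.2.2.2 ≠ 0 := mul_ne_zero h3 h4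
  have e24 : S.2.1 * S.2.2.2 ≠ 0 := mul_ne_zero h2 h4
  have e23 : S.2.1 * S.2.2.1 ≠ 0 := mul_ne_zero h2 h3
  fun_prop (disch := assumption)

lemma Vv_fixed (S : ℝ × ℝ × ℝ × ℝ) (hW : Wv S = 0) : Vv S = ipv S • S := by
  obtain ⟨a1, a2, a3, a4⟩ := S
  simp only [Wv, W1, W2, W3, W4, Prod.mk_eq_zero, sub_eq_zero] at hW
  obtain ⟨e1, e2, e3, e4⟩ := hW
  simp only [Vv, ipv, Prod.smul_mk, smul_eq_mul, e1, e2, e3, e4]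

/-- if a solution of `dR/dt = V(R)` on `(t₀,∞)` has radial projection
`R/|R|` converging to a stationary point `S*` of `W`, then `R(t)/t → ⟨V(S*),S*⟩ S*`
as `t → ∞`; i.e. the solution is asymptotic to the conic solution determined by
`S*`. -/
theorem statement9 (t0 : ℝ) (R : ℝ → ℝ × ℝ × ℝ × ℝ)
    (hR0 : ∀ t ∈ Set.Ioi t0, R t ≠ 0)
    (h2 : ∀ t ∈ Set.Ioi t0, (R t).2.1 ≠ 0)
    (h3 : ∀ t ∈ Set.Ioi t0, (R t).2.2.1 ≠ 0)
    (h4 : ∀ t ∈ Set.Ioi t0, (R t).2.2.2 ≠ 0)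
    (hderiv : ∀ t ∈ Set.Ioi t0, HasDerivAt R (Vv (R t)) t)
    (Sstar : ℝ × ℝ × ℝ × ℝ)
    (hnorm : Sstar.1^2 + Sstar.2.1^2 + Sstar.2.2.1^2 + Sstar.2.2.2^2 = 1)
    (hs2 : Sstar.2.1 ≠ 0) (hs3 : Sstar.2.2.1 ≠ 0) (hs4 : Sstar.2.2.2 ≠ 0)
    (hW : Wv Sstar = 0)
    (hlim : Filter.Tendsto (fun t => (enorm4 (R t))⁻¹ • R t)
      Filter.atTop (nhds Sstar)) :
    Filter.Tendsto (fun t => t⁻¹ • R t) Filter.atTop (nhds (ipv Sstar • Sstar)) := by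
  have hVlim : Filter.Tendsto (fun t => Vv (R t)) Filter.atTop (nhds (ipv Sstar • Sstar)) := by
    rw [← Vv_fixed Sstar hW]
    have hcont := Vv_continuousAt Sstar hs2 hs3 hs4
    have h := hcont.tendsto.comp hlim
    apply h.congr'
    filter_upwards [Filter.eventually_gt_atTop t0] with t ht
    have hmem : t ∈ Set.Ioi t0 := ht
    have hne : enorm4 (R t) ≠ 0 := ne_of_gt (enorm4_pos _ (hR0 t hmem))
    exact Vv_smul _ (inv_ne_zero hne) _ (h2 t hmem) (h3 t hmem) (h4 t hmem)
  exact cesaro R (fun t => Vv (R t)) t0 hderiv _ hVlim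
end

section
/- For $r>9/4$ define $A_1(r)=\sqrt{\dfrac{(r-9/4)(r+9/4)}{(r-3/4)(r+3/4)}}$, $A_2(r)=\dfrac{1}{\sqrt3}\sqrt{(r+3/4)(r-9/4)}$, $B_1(r)=\dfrac{2r}{3}$, $B_2(r)=\dfrac{1}{\sqrt3}\sqrt{(r-3/4)(r+9/4)}$, and set $R(r)=(A_1(r),A_2(r),B_1(r),B_2(r))$. Then for every $r>9/4$: $A_1(r)\,R'(r)=V(R(r))$, i.e. in the arclength parameter $t$ with $dt=dr/A_1(r)$ the curve $R$ solves the system $dR/dt=V(R)$. -/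
set_option maxHeartbeats 1000000


/-- The Brandhuber et al. solution (3). -/
noncomputable def bA1 (r : ℝ) : ℝ :=
  Real.sqrt ((r - 9/4) * (r + 9/4) / ((r - 3/4) * (r + 3/4)))
noncomputable def bA2 (r : ℝ) : ℝ := (1 / Real.sqrt 3) * Real.sqrt ((r + 3/4) * (r - 9/4))
noncomputable def bB1 (r : ℝ) : ℝ := 2 * r / 3
noncomputable def bB2 (r : ℝ) : ℝ := (1 / Real.sqrt 3) * Real.sqrt ((r - 3/4) * (r + 9/4))
noncomputable def bR (r : ℝ) : ℝ × ℝ × ℝ × ℝ := (bA1 r, bA2 r, bB1 r, bB2 r)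

/-- for every `r > 9/4` the curve `R(r) = (A₁,A₂,B₁,B₂)(r)` of the
Brandhuber solution satisfies `A₁(r) R'(r) = V(R(r))`; i.e. in the arclength
parameter `t` with `dt = dr / A₁(r)` it solves `dR/dt = V(R)`. -/
theorem statement10 :
    ∀ r ∈ Set.Ioi (9/4 : ℝ), ∃ d : ℝ × ℝ × ℝ × ℝ,
      HasDerivAt bR d r ∧ bA1 r • d = Vv (bR r) := by
  intro r hr
  simp only [Set.mem_Ioi] at hr
  have h9 : (0:ℝ) < r - 9/4 := by linarith
  have h9' : (0:ℝ) < r + 9/4 := by linarith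
  have h3 : (0:ℝ) < r - 3/4 := by linarith
  have h3' : (0:ℝ) < r + 3/4 := by linarith
  set s2 := Real.sqrt ((r + 3/4) * (r - 9/4)) with hs2def
  set s4 := Real.sqrt ((r - 3/4) * (r + 9/4)) with hs4def
  set t := Real.sqrt 3 with htdef
  have hs2pos : 0 < s2 := Real.sqrt_pos.mpr (by positivity)
  have hs4pos : 0 < s4 := Real.sqrt_pos.mpr (by positivity)
  have htpos : 0 < t := Real.sqrt_pos.mpr (by norm_num)
  have hs2sq : s2 ^ 2 = r^2 - 3/2*r - 27/16 := by
    rw [hs2def, Real.sq_sqrt (by positivity)]; ring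
  have hs4sq : s4 ^ 2 = r^2 + 3/2*r - 27/16 := by
    rw [hs4def, Real.sq_sqrt (by positivity)]; ring
  have htsq : t ^ 2 = 3 := Real.sq_sqrt (by norm_num)
  have hA1 : Real.sqrt ((r - 9/4) * (r + 9/4) / ((r - 3/4) * (r + 3/4)))
      = s2 * s4 / ((r - 3/4) * (r + 3/4)) := by
    have h1 : (r - 9/4) * (r + 9/4) / ((r - 3/4) * (r + 3/4))
        = ((r + 3/4) * (r - 9/4)) * ((r - 3/4) * (r + 9/4)) / ((r - 3/4) * (r + 3/4)) ^ 2 := by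
      rw [div_eq_div_iff (by positivity) (by positivity)]; ring
    rw [h1, Real.sqrt_div (by positivity), Real.sqrt_mul (by positivity),
      Real.sqrt_sq (by positivity)]
  have gen : ∀ x y q : ℝ, q ≠ 0 → y ≠ 0 → x/q^2/(2*(y/q)) = x/(2*q*y) := by
    intro x y q hq hy; field_simp
  -- derivatives
  have hnum : HasDerivAt (fun x : ℝ => (x - 9/4) * (x + 9/4)) (2*r) r := by
    have := ((hasDerivAt_id r).sub_const (9/4)).mul ((hasDerivAt_id r).add_const (9/4))
    exact this.congr_deriv (by simp; ring)
  have hden : HasDerivAt (fun x : ℝ => (x - 3/4) * (x + 3/4)) (2*r) r := by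
    have := ((hasDerivAt_id r).sub_const (3/4)).mul ((hasDerivAt_id r).add_const (3/4))
    exact this.congr_deriv (by simp; ring)
  have hu' : HasDerivAt (fun x : ℝ => (x + 3/4) * (x - 9/4)) (2*r - 3/2) r := by
    have := ((hasDerivAt_id r).add_const (3/4)).mul ((hasDerivAt_id r).sub_const (9/4))
    exact this.congr_deriv (by simp; ring)
  have hv' : HasDerivAt (fun x : ℝ => (x - 3/4) * (x + 9/4)) (2*r + 3/2) r := by
    have := ((hasDerivAt_id r).sub_const (3/4)).mul ((hasDerivAt_id r).add_const (9/4))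
    exact this.congr_deriv (by simp; ring)
  have hA1' : HasDerivAt bA1 (9*r / (2 * ((r-3/4)*(r+3/4)) * s2 * s4)) r := by
    have h := (hnum.div hden (by positivity)).sqrt (by simp only [Pi.div_apply]; positivity)
    unfold bA1
    convert h using 1
    · rfl
    simp only [Pi.div_apply]; rw [hA1]
    have e1 : (2 * r * ((r - 3/4) * (r + 3/4)) - (r - 9/4) * (r + 9/4) * (2 * r)) = 9*r := by ring
    rw [e1, gen _ _ _ (by positivity) (by positivity)]; ring
  have hA2' : HasDerivAt bA2 ((1/t) * ((2*r - 3/2) / (2 * s2))) r := by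
    have h := (hu'.sqrt (by positivity)).const_mul (1/t)
    exact h
  have hB1' : HasDerivAt bB1 (2/3) r := by
    have : HasDerivAt (fun x : ℝ => 2 * x / 3) (2/3) r := by
      have := ((hasDerivAt_id r).const_mul 2).div_const 3
      exact this.congr_deriv (by norm_num)
    exact this
  have hB2' : HasDerivAt bB2 ((1/t) * ((2*r + 3/2) / (2 * s4))) r := by
    have h := (hv'.sqrt (by positivity)).const_mul (1/t)
    exact h
  refine ⟨(9*r / (2 * ((r-3/4)*(r+3/4)) * s2 * s4), (1/t) * ((2*r - 3/2) / (2 * s2)),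
      2/3, (1/t) * ((2*r + 3/2) / (2 * s4))), hA1'.prodMk (hA2'.prodMk (hB1'.prodMk hB2')), ?_⟩
  have hA2v : bA2 r = s2 / t := by rw [bA2]; rw [one_div]; rw [inv_mul_eq_div]
  have hB2v : bB2 r = s4 / t := by rw [bB2]; rw [one_div]; rw [inv_mul_eq_div]
  have hx3 : r * 4 - 3 ≠ 0 := by nlinarith
  have hx3' : r * 4 + 3 ≠ 0 := by nlinarith
  clear_value s2 s4 t
  clear hs2def hs4def htdef
  simp only [bR, Vv, Prod.smul_def, smul_eq_mul, Prod.mk.injEq, bA1, hA1, hA2v, hB2v, bB1,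
    V1, V2, V3, V4]
  refine ⟨?_, ?_, ?_, ?_⟩
  · field_simp [hx3, hx3', hs2pos.ne', hs4pos.ne', htpos.ne']
    linear_combination t^2 * hs2sq - t^2 * hs4sq - 3*r*htsq

  · field_simp [hx3, hx3', hs2pos.ne', hs4pos.ne', htpos.ne']
    rw [hs2sq, hs4sq, htsq]; ring

  · field_simp [hx3, hx3', hs2pos.ne', hs4pos.ne', htpos.ne']
    rw [hs2sq, hs4sq, htsq]; ring

  · field_simp [hx3, hx3', hs2pos.ne', hs4pos.ne', htpos.ne']
    rw [hs2sq, hs4sq, htsq]; ring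
end

section
/- There is no 'conditionally stationary' point of the system $dS/du=W(S)$ on the unit sphere of $\mathbb{R}^4$. Precisely: there exist no point $S=(\alpha_1,\alpha_2,\alpha_3,\alpha_4)$ with $|S|=1$ and $\alpha_2\alpha_3\alpha_4=0$, no $\varepsilon>0$, and no real-analytic curve $\gamma:(-\varepsilon,\varepsilon)\to\mathbb{R}^4$ with $|\gamma(u)|=1$ for all $u$ and $\gamma(0)=S$, such that the components $\gamma_2(u),\gamma_3(u),\gamma_4(u)$ are all nonzero for every $u\neq 0$, the map $u\mapsto V(\gamma(u))$ (defined for $u\neq 0$) extends to a continuous map on $(-\varepsilon,\varepsilon)$, and $W(\gamma(u))\to 0$ as $u\to 0$. -/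
open Filter Topology


lemma alg_step1a (a b c d X Y : ℝ) (hX : X ≠ 0) (hY : Y ≠ 0) (hb : b ≠ 0) (hd : d ≠ 0) :
    a^2/b^2 - 2*(Y^2 * V1 a (Y*b) c (Y*X*d)) = a^2/(X^2*d^2) := by
  unfold V1; field_simp; ring

lemma alg_step1b (a b c d X Y : ℝ) (hX : X ≠ 0) (hY : Y ≠ 0) (hb : b ≠ 0) (hd : d ≠ 0) :
    a^2/d^2 + 2*(Y^2 * V1 a (Y*X*b) c (Y*d)) = a^2/(X^2*b^2) := by
  unfold V1; field_simp; ring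

lemma alg_qlt (a b c d X Y : ℝ) (hX : X ≠ 0) (hY : Y ≠ 0) (hb : b ≠ 0) (hd : d ≠ 0) :
    X^2 * V3 a (Y*X*b) (Y*c) (Y*X*d) = (X^2*(b^2+d^2) - c^2)/(b*d) := by
  unfold V3; field_simp

lemma alg_qgt (a b c d X Y : ℝ) (hX : X ≠ 0) (hY : Y ≠ 0) (hb : b ≠ 0) (hd : d ≠ 0) :
    V3 a (Y*b) (Y*X*c) (Y*d) = (b^2+d^2 - X^2*c^2)/(b*d) := by
  unfold V3; field_simp

lemma alg_qeq (b c d Y : ℝ) (hY : Y ≠ 0) (hc : c ≠ 0) (hd : d ≠ 0) :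
    ((Y*d)^2 - (Y*b)^2 + (Y*c)^2)/((Y*c)*(Y*d)) = (d^2-b^2+c^2)/(c*d) := by
  field_simp

lemma tpow (k : ℕ) (hk : k ≠ 0) :
    Tendsto (fun u : ℝ => u ^ k) (𝓝[≠] (0:ℝ)) (𝓝 0) := by
  have h := (continuous_pow k).tendsto (0:ℝ)
  rw [zero_pow hk] at h
  exact h.mono_left nhdsWithin_le_nhds

lemma lim_mul_vanish {f g : ℝ → ℝ} {k : ℕ} (hk : k ≠ 0) {M N P : ℝ}
    (hg : Tendsto g (𝓝[≠] (0:ℝ)) (𝓝 N))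
    (hgne : ∀ᶠ u in 𝓝[≠] (0:ℝ), g u ≠ 0)
    (h1 : Tendsto (fun u => f u / (u ^ k * g u)) (𝓝[≠] (0:ℝ)) (𝓝 M))
    (hf : Tendsto f (𝓝[≠] (0:ℝ)) (𝓝 P)) : P = 0 := by
  have h2 : Tendsto (fun u => f u / (u ^ k * g u) * (u ^ k * g u)) (𝓝[≠] (0:ℝ))
      (𝓝 (M * (0 * N))) := h1.mul ((tpow k hk).mul hg)
  have h3 : (fun u => f u / (u ^ k * g u) * (u ^ k * g u)) =ᶠ[𝓝[≠] (0:ℝ)] f := by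
    filter_upwards [hgne, eventually_mem_nhdsWithin] with u hgu hu
    have hu0 : u ≠ 0 := hu
    exact div_mul_cancel₀ _ (mul_ne_zero (pow_ne_zero _ hu0) hgu)
  have := tendsto_nhds_unique (h2.congr' h3) hf
  rw [← this]; ring

lemma factor_aux (f : ℝ → ℝ) (hf : AnalyticAt ℝ f 0) (h0 : f 0 = 0)
    (hne : ∀ᶠ u in 𝓝[≠] (0:ℝ), f u ≠ 0) :
    ∃ (n : ℕ) (g : ℝ → ℝ), n ≠ 0 ∧ ContinuousAt g 0 ∧ g 0 ≠ 0 ∧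
      ∀ᶠ u in 𝓝 (0:ℝ), f u = u ^ n * g u := by
  have hnz : ¬ ∀ᶠ z in 𝓝 (0:ℝ), f z = 0 := by
    intro h
    rcases ((h.filter_mono nhdsWithin_le_nhds).and hne).exists with ⟨u, h1, h2⟩
    exact h2 h1
  obtain ⟨n, g, hg, hg0, heq⟩ := hf.exists_eventuallyEq_pow_smul_nonzero_iff.mpr hnz
  have heq' : ∀ᶠ u in 𝓝 (0:ℝ), f u = u ^ n * g u := by
    filter_upwards [heq] with u hu
    simpa [smul_eq_mul] using hu
  refine ⟨n, g, ?_, hg.continuousAt, hg0, heq'⟩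
  intro hn
  apply hg0
  have := heq'.self_of_nhds
  rw [hn, pow_zero, one_mul] at this
  rw [← this, h0]

set_option maxHeartbeats 1000000 in
lemma key_s15 (a1 a2 a3 a4 : ℝ → ℝ) (A B C D lam M1 M2 M3 M4 : ℝ)
    (hsph : A^2 + B^2 + C^2 + D^2 = 1)
    (hBCD : B * C * D = 0)
    (han2 : AnalyticAt ℝ a2 0) (han3 : AnalyticAt ℝ a3 0) (han4 : AnalyticAt ℝ a4 0)
    (h20 : a2 0 = B) (h30 : a3 0 = C) (h40 : a4 0 = D)
    (ht1 : Tendsto a1 (𝓝[≠] (0:ℝ)) (𝓝 A))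
    (ht2 : Tendsto a2 (𝓝[≠] (0:ℝ)) (𝓝 B))
    (ht3 : Tendsto a3 (𝓝[≠] (0:ℝ)) (𝓝 C))
    (ht4 : Tendsto a4 (𝓝[≠] (0:ℝ)) (𝓝 D))
    (hne : ∀ᶠ u in 𝓝[≠] (0:ℝ), a2 u ≠ 0 ∧ a3 u ≠ 0 ∧ a4 u ≠ 0)
    (hV1 : Tendsto (fun u => V1 (a1 u) (a2 u) (a3 u) (a4 u)) (𝓝[≠] (0:ℝ)) (𝓝 M1))
    (hV2 : Tendsto (fun u => V2 (a1 u) (a2 u) (a3 u) (a4 u)) (𝓝[≠] (0:ℝ)) (𝓝 M2))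
    (hV3 : Tendsto (fun u => V3 (a1 u) (a2 u) (a3 u) (a4 u)) (𝓝[≠] (0:ℝ)) (𝓝 M3))
    (hV4 : Tendsto (fun u => V4 (a1 u) (a2 u) (a3 u) (a4 u)) (𝓝[≠] (0:ℝ)) (𝓝 M4))
    (e1 : M1 = lam * A) (e2 : M2 = lam * B) (e3 : M3 = lam * C) (e4 : M4 = lam * D) :
    False := by
  have hne2 : ∀ᶠ u in 𝓝[≠] (0:ℝ), a2 u ≠ 0 := hne.mono fun u h => h.1
  have hne3 : ∀ᶠ u in 𝓝[≠] (0:ℝ), a3 u ≠ 0 := hne.mono fun u h => h.2.1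
  have hne4 : ∀ᶠ u in 𝓝[≠] (0:ℝ), a4 u ≠ 0 := hne.mono fun u h => h.2.2
  have id3 : C * (B^2 + D^2 - C^2) = 0 := by
    have k1 : Tendsto (fun u => a2 u * a3 u * a4 u * V3 (a1 u) (a2 u) (a3 u) (a4 u))
        (𝓝[≠] (0:ℝ)) (𝓝 (B * C * D * M3)) := ((ht2.mul ht3).mul ht4).mul hV3
    have k2 : (fun u => a2 u * a3 u * a4 u * V3 (a1 u) (a2 u) (a3 u) (a4 u))
        =ᶠ[𝓝[≠] (0:ℝ)] fun u => a3 u * ((a2 u)^2 + (a4 u)^2 - (a3 u)^2) := by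
      filter_upwards [hne] with u ⟨h2, h3, h4⟩
      unfold V3; field_simp
    have k3 : Tendsto (fun u => a3 u * ((a2 u)^2 + (a4 u)^2 - (a3 u)^2))
        (𝓝[≠] (0:ℝ)) (𝓝 (C * (B^2 + D^2 - C^2))) :=
      ht3.mul (((ht2.pow 2).add (ht4.pow 2)).sub (ht3.pow 2))
    have := tendsto_nhds_unique (k1.congr' k2) k3
    rw [← this, hBCD]; ring
  have id2 : B * (D^2 - B^2 + C^2) - A * (C * D) = 0 := by
    have k1 : Tendsto (fun u => 2 * (a2 u * a3 u * a4 u * V2 (a1 u) (a2 u) (a3 u) (a4 u)))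
        (𝓝[≠] (0:ℝ)) (𝓝 (2 * (B * C * D * M2))) := (((ht2.mul ht3).mul ht4).mul hV2).const_mul 2
    have k2 : (fun u => 2 * (a2 u * a3 u * a4 u * V2 (a1 u) (a2 u) (a3 u) (a4 u)))
        =ᶠ[𝓝[≠] (0:ℝ)] fun u => a2 u * ((a4 u)^2 - (a2 u)^2 + (a3 u)^2) - a1 u * (a3 u * a4 u) := by
      filter_upwards [hne] with u ⟨h2, h3, h4⟩
      unfold V2; field_simp
    have k3 : Tendsto (fun u => a2 u * ((a4 u)^2 - (a2 u)^2 + (a3 u)^2) - a1 u * (a3 u * a4 u))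
        (𝓝[≠] (0:ℝ)) (𝓝 (B * (D^2 - B^2 + C^2) - A * (C * D))) :=
      (ht2.mul (((ht4.pow 2).sub (ht2.pow 2)).add (ht3.pow 2))).sub (ht1.mul (ht3.mul ht4))
    have := tendsto_nhds_unique (k1.congr' k2) k3
    rw [← this, hBCD]; ring
  have id4 : D * (B^2 - D^2 + C^2) + A * (B * C) = 0 := by
    have k1 : Tendsto (fun u => 2 * (a2 u * a3 u * a4 u * V4 (a1 u) (a2 u) (a3 u) (a4 u)))
        (𝓝[≠] (0:ℝ)) (𝓝 (2 * (B * C * D * M4))) := (((ht2.mul ht3).mul ht4).mul hV4).const_mul 2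
    have k2 : (fun u => 2 * (a2 u * a3 u * a4 u * V4 (a1 u) (a2 u) (a3 u) (a4 u)))
        =ᶠ[𝓝[≠] (0:ℝ)] fun u => a4 u * ((a2 u)^2 - (a4 u)^2 + (a3 u)^2) + a1 u * (a2 u * a3 u) := by
      filter_upwards [hne] with u ⟨h2, h3, h4⟩
      unfold V4; field_simp
    have k3 : Tendsto (fun u => a4 u * ((a2 u)^2 - (a4 u)^2 + (a3 u)^2) + a1 u * (a2 u * a3 u))
        (𝓝[≠] (0:ℝ)) (𝓝 (D * (B^2 - D^2 + C^2) + A * (B * C))) :=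
      (ht4.mul (((ht2.pow 2).sub (ht4.pow 2)).add (ht3.pow 2))).add (ht1.mul (ht2.mul ht3))
    have := tendsto_nhds_unique (k1.congr' k2) k3
    rw [← this, hBCD]; ring
  by_cases hB : B = 0
  · by_cases hD : D = 0
    · -- hard case: B = D = 0, then C = 0 and A² = 1
      have hC : C = 0 := by
        rw [hB, hD] at id3
        have h3 : C^3 = 0 := by linear_combination -id3
        exact pow_eq_zero_iff (by norm_num : (3:ℕ) ≠ 0) |>.mp h3
      have hA2 : A^2 = 1 := by rw [hB, hC, hD] at hsph; nlinarith [hsph]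
      obtain ⟨p, Bf, hp, hBc, hB0, hBeq⟩ := factor_aux a2 han2 (by rw [h20, hB]) hne2
      obtain ⟨q, Cf, hq, hCc, hC0, hCeq⟩ := factor_aux a3 han3 (by rw [h30, hC]) hne3
      obtain ⟨r, Df, hr, hDc, hD0, hDeq⟩ := factor_aux a4 han4 (by rw [h40, hD]) hne4
      have hBl : Tendsto Bf (𝓝[≠] (0:ℝ)) (𝓝 (Bf 0)) := hBc.tendsto.mono_left nhdsWithin_le_nhds
      have hCl : Tendsto Cf (𝓝[≠] (0:ℝ)) (𝓝 (Cf 0)) := hCc.tendsto.mono_left nhdsWithin_le_nhds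
      have hDl : Tendsto Df (𝓝[≠] (0:ℝ)) (𝓝 (Df 0)) := hDc.tendsto.mono_left nhdsWithin_le_nhds
      have hev : ∀ᶠ u in 𝓝[≠] (0:ℝ), u ≠ 0 ∧ a2 u = u^p * Bf u ∧ a3 u = u^q * Cf u ∧
          a4 u = u^r * Df u ∧ Bf u ≠ 0 ∧ Cf u ≠ 0 ∧ Df u ≠ 0 := by
        filter_upwards [eventually_mem_nhdsWithin, hBeq.filter_mono nhdsWithin_le_nhds,
          hCeq.filter_mono nhdsWithin_le_nhds, hDeq.filter_mono nhdsWithin_le_nhds, hne]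
          with u hu e2' e3' e4' hn
        have hu0 : u ≠ 0 := hu
        refine ⟨hu0, e2', e3', e4', ?_, ?_, ?_⟩
        · exact fun h => hn.1 (by rw [e2', h, mul_zero])
        · exact fun h => hn.2.1 (by rw [e3', h, mul_zero])
        · exact fun h => hn.2.2 (by rw [e4', h, mul_zero])
      have hpr : p = r := by
        rcases lt_trichotomy p r with hlt | hEq | hlt
        · exfalso
          obtain ⟨k, hk⟩ : ∃ k, r = p + (k + 1) := ⟨r - p - 1, by omega⟩
          have hF : Tendsto (fun u => (a1 u)^2 / (Bf u)^2
                - 2 * ((u^p)^2 * V1 (a1 u) (a2 u) (a3 u) (a4 u)))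
              (𝓝[≠] (0:ℝ)) (𝓝 (A^2/(Bf 0)^2 - 2*(0^2*M1))) :=
            ((ht1.pow 2).div (hBl.pow 2) (pow_ne_zero _ hB0)).sub
              ((((tpow p (by omega)).pow 2).mul hV1).const_mul 2)
          have hGeq : (fun u => (a1 u)^2/(Bf u)^2
                - 2*((u^p)^2 * V1 (a1 u) (a2 u) (a3 u) (a4 u)))
              =ᶠ[𝓝[≠] (0:ℝ)] fun u => (a1 u)^2 / (u^(2*(k+1)) * (Df u)^2) := by
            filter_upwards [hev] with u ⟨hu0, e2', e3', e4', nb, nc, nd⟩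
            rw [e2', e4', hk, pow_add, show 2*(k+1) = (k+1)*2 from mul_comm 2 (k+1), pow_mul]
            exact alg_step1a (a1 u) (Bf u) (a3 u) (Df u) _ _
              (pow_ne_zero _ hu0) (pow_ne_zero _ hu0) nb nd
          have hz := lim_mul_vanish (f := fun u => (a1 u)^2) (g := fun u => (Df u)^2)
            (by omega : 2*(k+1) ≠ 0) (hDl.pow 2) (hev.mono fun u h => pow_ne_zero 2 h.2.2.2.2.2.2)
            (hF.congr' hGeq) (ht1.pow 2)
          rw [hz] at hA2; norm_num at hA2
        · exact hEq
        · exfalso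
          obtain ⟨k, hk⟩ : ∃ k, p = r + (k + 1) := ⟨p - r - 1, by omega⟩
          have hF : Tendsto (fun u => (a1 u)^2 / (Df u)^2
                + 2 * ((u^r)^2 * V1 (a1 u) (a2 u) (a3 u) (a4 u)))
              (𝓝[≠] (0:ℝ)) (𝓝 (A^2/(Df 0)^2 + 2*(0^2*M1))) :=
            ((ht1.pow 2).div (hDl.pow 2) (pow_ne_zero _ hD0)).add
              ((((tpow r (by omega)).pow 2).mul hV1).const_mul 2)
          have hGeq : (fun u => (a1 u)^2/(Df u)^2
                + 2*((u^r)^2 * V1 (a1 u) (a2 u) (a3 u) (a4 u)))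
              =ᶠ[𝓝[≠] (0:ℝ)] fun u => (a1 u)^2 / (u^(2*(k+1)) * (Bf u)^2) := by
            filter_upwards [hev] with u ⟨hu0, e2', e3', e4', nb, nc, nd⟩
            rw [e2', e4', hk, pow_add, show 2*(k+1) = (k+1)*2 from mul_comm 2 (k+1), pow_mul]
            exact alg_step1b (a1 u) (Bf u) (a3 u) (Df u) _ _
              (pow_ne_zero _ hu0) (pow_ne_zero _ hu0) nb nd
          have hz := lim_mul_vanish (f := fun u => (a1 u)^2) (g := fun u => (Bf u)^2)
            (by omega : 2*(k+1) ≠ 0) (hBl.pow 2) (hev.mono fun u h => pow_ne_zero 2 h.2.2.2.2.1)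
            (hF.congr' hGeq) (ht1.pow 2)
          rw [hz] at hA2; norm_num at hA2
      subst hpr
      rcases lt_trichotomy q p with hlt | hEq | hlt
      · -- q < p : V3 blows up
        obtain ⟨k, hk⟩ : ∃ k, p = q + (k + 1) := ⟨p - q - 1, by omega⟩
        have hF : Tendsto (fun u => (u^(k+1))^2 * V3 (a1 u) (a2 u) (a3 u) (a4 u))
            (𝓝[≠] (0:ℝ)) (𝓝 (0^2 * M3)) := ((tpow (k+1) (by omega)).pow 2).mul hV3
        have hGeq : (fun u => (u^(k+1))^2 * V3 (a1 u) (a2 u) (a3 u) (a4 u))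
            =ᶠ[𝓝[≠] (0:ℝ)] fun u =>
              ((u^(k+1))^2 * ((Bf u)^2 + (Df u)^2) - (Cf u)^2)/(Bf u * Df u) := by
          filter_upwards [hev] with u ⟨hu0, e2', e3', e4', nb, nc, nd⟩
          rw [e2', e3', e4', hk,
            show (u:ℝ)^(q+(k+1)) = u^q * u^(k+1) from pow_add u q (k+1)]
          exact alg_qlt (a1 u) (Bf u) (Cf u) (Df u) _ _
            (pow_ne_zero _ hu0) (pow_ne_zero _ hu0) nb nd
        have hG : Tendsto (fun u =>
              ((u^(k+1))^2 * ((Bf u)^2 + (Df u)^2) - (Cf u)^2)/(Bf u * Df u))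
            (𝓝[≠] (0:ℝ)) (𝓝 ((0^2 * ((Bf 0)^2 + (Df 0)^2) - (Cf 0)^2)/(Bf 0 * Df 0))) :=
          ((((tpow (k+1) (by omega)).pow 2).mul ((hBl.pow 2).add (hDl.pow 2))).sub
            (hCl.pow 2)).div (hBl.mul hDl) (mul_ne_zero hB0 hD0)
        have hz := tendsto_nhds_unique (hF.congr' hGeq) hG
        simp only [e3, hC, mul_zero] at hz
        have hCf2 : (Cf 0)^2 = 0 := by
          have h0 : (0:ℝ)^2 * ((Bf 0)^2 + (Df 0)^2) - (Cf 0)^2 = -(Cf 0)^2 := by ring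
          rw [h0] at hz
          rcases div_eq_zero_iff.mp hz.symm with h | h
          · linarith
          · exact absurd h (mul_ne_zero hB0 hD0)
        exact hC0 (pow_eq_zero_iff (by norm_num : (2:ℕ) ≠ 0) |>.mp hCf2)
      · -- q = p : V2 forces a1 → 0, contradicting A² = 1
        subst hEq
        have hfr : (fun u => ((a4 u)^2 - (a2 u)^2 + (a3 u)^2)/(a3 u * a4 u))
            =ᶠ[𝓝[≠] (0:ℝ)] fun u => ((Df u)^2 - (Bf u)^2 + (Cf u)^2)/(Cf u * Df u) := by
          filter_upwards [hev] with u ⟨hu0, e2', e3', e4', nb, nc, nd⟩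
          rw [e2', e3', e4']
          exact alg_qeq (Bf u) (Cf u) (Df u) _ (pow_ne_zero _ hu0) nc nd
        have hfrt : Tendsto (fun u => ((a4 u)^2 - (a2 u)^2 + (a3 u)^2)/(a3 u * a4 u))
            (𝓝[≠] (0:ℝ)) (𝓝 (((Df 0)^2 - (Bf 0)^2 + (Cf 0)^2)/(Cf 0 * Df 0))) := by
          have h := (((hDl.pow 2).sub (hBl.pow 2)).add (hCl.pow 2)).div (hCl.mul hDl)
            (mul_ne_zero hC0 hD0)
          exact h.congr' hfr.symm
        have hratio : Tendsto (fun u => a1 u / a2 u) (𝓝[≠] (0:ℝ))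
            (𝓝 (((Df 0)^2 - (Bf 0)^2 + (Cf 0)^2)/(Cf 0 * Df 0) - 2 * M2)) := by
          have heq2 : (fun u => a1 u / a2 u)
              = fun u => ((a4 u)^2 - (a2 u)^2 + (a3 u)^2)/(a3 u * a4 u)
                  - 2 * V2 (a1 u) (a2 u) (a3 u) (a4 u) := by
            funext u; unfold V2; ring
          rw [heq2]
          exact hfrt.sub (hV2.const_mul 2)
        have hA0 : (((Df 0)^2 - (Bf 0)^2 + (Cf 0)^2)/(Cf 0 * Df 0) - 2 * M2) * B = A := by
          have h1 := hratio.mul ht2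
          have h2 : (fun u => a1 u / a2 u * a2 u) =ᶠ[𝓝[≠] (0:ℝ)] a1 := by
            filter_upwards [hne2] with u h2
            exact div_mul_cancel₀ _ h2
          exact tendsto_nhds_unique (h1.congr' h2) ht1
        rw [hB, mul_zero] at hA0
        rw [← hA0] at hA2; norm_num at hA2
      · -- q > p : V3 has nonzero limit but M3 = 0
        obtain ⟨k, hk⟩ : ∃ k, q = p + (k + 1) := ⟨q - p - 1, by omega⟩
        have hGeq : (fun u => V3 (a1 u) (a2 u) (a3 u) (a4 u))
            =ᶠ[𝓝[≠] (0:ℝ)] fun u =>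
              ((Bf u)^2 + (Df u)^2 - (u^(k+1))^2 * (Cf u)^2)/(Bf u * Df u) := by
          filter_upwards [hev] with u ⟨hu0, e2', e3', e4', nb, nc, nd⟩
          rw [e2', e3', e4', hk,
            show (u:ℝ)^(p+(k+1)) = u^p * u^(k+1) from pow_add u p (k+1)]
          exact alg_qgt (a1 u) (Bf u) (Cf u) (Df u) _ _
            (pow_ne_zero _ hu0) (pow_ne_zero _ hu0) nb nd
        have hG : Tendsto (fun u =>
              ((Bf u)^2 + (Df u)^2 - (u^(k+1))^2 * (Cf u)^2)/(Bf u * Df u))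
            (𝓝[≠] (0:ℝ)) (𝓝 (((Bf 0)^2 + (Df 0)^2 - 0^2 * (Cf 0)^2)/(Bf 0 * Df 0))) :=
          (((hBl.pow 2).add (hDl.pow 2)).sub
            (((tpow (k+1) (by omega)).pow 2).mul (hCl.pow 2))).div (hBl.mul hDl)
            (mul_ne_zero hB0 hD0)
        have hz := tendsto_nhds_unique (hV3.congr' hGeq) hG
        rw [e3, hC, mul_zero] at hz
        have hnum : (Bf 0)^2 + (Df 0)^2 = 0 := by
          have h0 : (Bf 0)^2 + (Df 0)^2 - (0:ℝ)^2 * (Cf 0)^2 = (Bf 0)^2 + (Df 0)^2 := by ring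
          rw [h0] at hz
          rcases div_eq_zero_iff.mp hz.symm with h | h
          · exact h
          · exact absurd h (mul_ne_zero hB0 hD0)
        nlinarith [sq_nonneg (Bf 0), sq_nonneg (Df 0), pow_pos (abs_pos.mpr hB0) 2,
          sq_abs (Bf 0)]
    · -- B = 0, D ≠ 0
      by_cases hC : C = 0
      · -- id4 gives D³ = 0
        rw [hB, hC] at id4
        apply hD
        have h3 : D^3 = 0 := by linear_combination -id4
        exact pow_eq_zero_iff (by norm_num : (3:ℕ) ≠ 0) |>.mp h3
      · -- B = 0, C ≠ 0, D ≠ 0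
        have hCD : C * D ≠ 0 := mul_ne_zero hC hD
        have hfrt : Tendsto (fun u => ((a4 u)^2 - (a2 u)^2 + (a3 u)^2)/(a3 u * a4 u))
            (𝓝[≠] (0:ℝ)) (𝓝 ((D^2 - B^2 + C^2)/(C*D))) :=
          (((ht4.pow 2).sub (ht2.pow 2)).add (ht3.pow 2)).div (ht3.mul ht4) hCD
        have hratio : Tendsto (fun u => a1 u / a2 u) (𝓝[≠] (0:ℝ))
            (𝓝 ((D^2 - B^2 + C^2)/(C*D) - 2 * M2)) := by
          have heq2 : (fun u => a1 u / a2 u)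
              = fun u => ((a4 u)^2 - (a2 u)^2 + (a3 u)^2)/(a3 u * a4 u)
                  - 2 * V2 (a1 u) (a2 u) (a3 u) (a4 u) := by
            funext u; unfold V2; ring
          rw [heq2]
          exact hfrt.sub (hV2.const_mul 2)
        have hA0 : ((D^2 - B^2 + C^2)/(C*D) - 2 * M2) * B = A := by
          have h1 := hratio.mul ht2
          have h2 : (fun u => a1 u / a2 u * a2 u) =ᶠ[𝓝[≠] (0:ℝ)] a1 := by
            filter_upwards [hne2] with u h2
            exact div_mul_cancel₀ _ h2
          exact tendsto_nhds_unique (h1.congr' h2) ht1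
        rw [hB, mul_zero] at hA0
        have hA' : A = 0 := hA0.symm
        -- now V1 limit
        have hV1' : Tendsto (fun u => V1 (a1 u) (a2 u) (a3 u) (a4 u)) (𝓝[≠] (0:ℝ))
            (𝓝 (1/2 * (((D^2 - B^2 + C^2)/(C*D) - 2 * M2)^2 - (A/D)^2))) := by
          have heq1 : (fun u => V1 (a1 u) (a2 u) (a3 u) (a4 u))
              = fun u => 1/2 * ((a1 u / a2 u)^2 - (a1 u / a4 u)^2) := by
            funext u; unfold V1; rw [div_pow, div_pow]
          rw [heq1]
          exact ((hratio.pow 2).sub ((ht1.div ht4 hD).pow 2)).const_mul (1/2)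
        have hM1 := tendsto_nhds_unique hV1 hV1'
        rw [e1, hA', mul_zero] at hM1
        have hμ0 : (D^2 - B^2 + C^2)/(C*D) - 2 * M2 = 0 := by
          have hsq : ((D^2 - B^2 + C^2)/(C*D) - 2 * M2)^2 = 0 := by
            rw [zero_div] at hM1
            nlinarith [hM1]
          exact pow_eq_zero_iff (by norm_num : (2:ℕ) ≠ 0) |>.mp hsq
        rw [e2, hB, mul_zero, mul_zero, sub_zero] at hμ0
        have hnum : D^2 - 0^2 + C^2 = 0 := by
          rcases div_eq_zero_iff.mp hμ0 with h | h
          · exact h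
          · exact absurd h hCD
        nlinarith [sq_nonneg D, pow_pos (abs_pos.mpr hC) 2, sq_abs C]
  · by_cases hD : D = 0
    · by_cases hC : C = 0
      · -- id2 gives B³ = 0
        rw [hD, hC] at id2
        apply hB
        have h3 : B^3 = 0 := by linear_combination -id2
        exact pow_eq_zero_iff (by norm_num : (3:ℕ) ≠ 0) |>.mp h3
      · -- D = 0, B ≠ 0, C ≠ 0 : symmetric via V4 and a1/a4
        have hBC : B * C ≠ 0 := mul_ne_zero hB hC
        have hfrt : Tendsto (fun u => ((a2 u)^2 - (a4 u)^2 + (a3 u)^2)/(a2 u * a3 u))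
            (𝓝[≠] (0:ℝ)) (𝓝 ((B^2 - D^2 + C^2)/(B*C))) :=
          (((ht2.pow 2).sub (ht4.pow 2)).add (ht3.pow 2)).div (ht2.mul ht3) hBC
        have hratio : Tendsto (fun u => a1 u / a4 u) (𝓝[≠] (0:ℝ))
            (𝓝 (2 * M4 - (B^2 - D^2 + C^2)/(B*C))) := by
          have heq2 : (fun u => a1 u / a4 u)
              = fun u => 2 * V4 (a1 u) (a2 u) (a3 u) (a4 u)
                  - ((a2 u)^2 - (a4 u)^2 + (a3 u)^2)/(a2 u * a3 u) := by
            funext u; unfold V4; ring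
          rw [heq2]
          exact (hV4.const_mul 2).sub hfrt
        have hA0 : (2 * M4 - (B^2 - D^2 + C^2)/(B*C)) * D = A := by
          have h1 := hratio.mul ht4
          have h2 : (fun u => a1 u / a4 u * a4 u) =ᶠ[𝓝[≠] (0:ℝ)] a1 := by
            filter_upwards [hne4] with u h2
            exact div_mul_cancel₀ _ h2
          exact tendsto_nhds_unique (h1.congr' h2) ht1
        rw [hD, mul_zero] at hA0
        have hA' : A = 0 := hA0.symm
        have hV1' : Tendsto (fun u => V1 (a1 u) (a2 u) (a3 u) (a4 u)) (𝓝[≠] (0:ℝ))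
            (𝓝 (1/2 * ((A/B)^2 - (2 * M4 - (B^2 - D^2 + C^2)/(B*C))^2))) := by
          have heq1 : (fun u => V1 (a1 u) (a2 u) (a3 u) (a4 u))
              = fun u => 1/2 * ((a1 u / a2 u)^2 - (a1 u / a4 u)^2) := by
            funext u; unfold V1; rw [div_pow, div_pow]
          rw [heq1]
          exact (((ht1.div ht2 hB).pow 2).sub (hratio.pow 2)).const_mul (1/2)
        have hM1 := tendsto_nhds_unique hV1 hV1'
        rw [e1, hA', mul_zero] at hM1
        have hμ0 : 2 * M4 - (B^2 - D^2 + C^2)/(B*C) = 0 := by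
          have hsq : (2 * M4 - (B^2 - D^2 + C^2)/(B*C))^2 = 0 := by
            rw [zero_div] at hM1
            nlinarith [hM1]
          exact pow_eq_zero_iff (by norm_num : (2:ℕ) ≠ 0) |>.mp hsq
        rw [e4, hD, mul_zero, mul_zero] at hμ0
        have hnum : B^2 - 0^2 + C^2 = 0 := by
          have h' : (B^2 - 0^2 + C^2)/(B*C) = 0 := by linarith
          rcases div_eq_zero_iff.mp h' with h | h
          · exact h
          · exact absurd h hBC
        nlinarith [sq_nonneg B, pow_pos (abs_pos.mpr hC) 2, sq_abs C]
    · -- B ≠ 0, D ≠ 0 forces C = 0, and then V3 limit is nonzero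
      have hC : C = 0 := by
        rcases mul_eq_zero.mp hBCD with h | h
        · rcases mul_eq_zero.mp h with h' | h'
          · exact absurd h' hB
          · exact h'
        · exact absurd h hD
      have hBD : B * D ≠ 0 := mul_ne_zero hB hD
      have hV3' : Tendsto (fun u => V3 (a1 u) (a2 u) (a3 u) (a4 u)) (𝓝[≠] (0:ℝ))
          (𝓝 ((B^2 + D^2 - C^2)/(B*D))) :=
        (((ht2.pow 2).add (ht4.pow 2)).sub (ht3.pow 2)).div (ht2.mul ht4) hBD
      have hM3 := tendsto_nhds_unique hV3 hV3'
      rw [e3, hC, mul_zero] at hM3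
      have hnum : B^2 + D^2 - 0^2 = 0 := by
        rcases div_eq_zero_iff.mp hM3.symm with h | h
        · exact h
        · exact absurd h hBD
      nlinarith [sq_nonneg D, pow_pos (abs_pos.mpr hB) 2, sq_abs B]

/-- Lemma 6: system (6) has no conditionally stationary points on the
unit sphere: there is no point `S` on the sphere with `α₂α₃α₄ = 0` admitting a
real-analytic curve `γ` on the sphere through `S`, with `γ₂, γ₃, γ₄ ≠ 0` off
`u = 0`, along which `V` extends continuously and `W(γ(u)) → 0` as `u → 0`. -/
theorem statement15 :
    ¬ ∃ (S : ℝ × ℝ × ℝ × ℝ) (ε : ℝ) (γ Vext : ℝ → ℝ × ℝ × ℝ × ℝ),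
      S.1^2 + S.2.1^2 + S.2.2.1^2 + S.2.2.2^2 = 1 ∧
      S.2.1 * S.2.2.1 * S.2.2.2 = 0 ∧
      0 < ε ∧
      (∀ u ∈ Set.Ioo (-ε) ε, AnalyticAt ℝ γ u) ∧
      (∀ u ∈ Set.Ioo (-ε) ε,
        (γ u).1^2 + (γ u).2.1^2 + (γ u).2.2.1^2 + (γ u).2.2.2^2 = 1) ∧
      γ 0 = S ∧
      (∀ u ∈ Set.Ioo (-ε) ε, u ≠ 0 →
        (γ u).2.1 ≠ 0 ∧ (γ u).2.2.1 ≠ 0 ∧ (γ u).2.2.2 ≠ 0) ∧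
      ContinuousOn Vext (Set.Ioo (-ε) ε) ∧
      (∀ u ∈ Set.Ioo (-ε) ε, u ≠ 0 → Vext u = Vv (γ u)) ∧
      Filter.Tendsto (fun u => Wv (γ u)) (nhdsWithin 0 {(0:ℝ)}ᶜ) (nhds 0) := by
  rintro ⟨S, ε, γ, Vext, hsph, hBCD, hε, han, -, hγ0, hne', hVc, hVeq, hW⟩
  have h0mem : (0:ℝ) ∈ Set.Ioo (-ε) ε := ⟨by linarith, hε⟩
  have hIoo : Set.Ioo (-ε) ε ∈ 𝓝 (0:ℝ) := Ioo_mem_nhds (by linarith) hε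
  have hevIoo : ∀ᶠ u in 𝓝[≠] (0:ℝ), u ∈ Set.Ioo (-ε) ε :=
    mem_nhdsWithin_of_mem_nhds hIoo
  have hγ : AnalyticAt ℝ γ 0 := han 0 h0mem
  have han2 : AnalyticAt ℝ (fun u => (γ u).2.1) 0 :=
    analyticAt_fst.comp (analyticAt_snd.comp hγ)
  have han3 : AnalyticAt ℝ (fun u => (γ u).2.2.1) 0 :=
    analyticAt_fst.comp (analyticAt_snd.comp (analyticAt_snd.comp hγ))
  have han4 : AnalyticAt ℝ (fun u => (γ u).2.2.2) 0 :=
    analyticAt_snd.comp (analyticAt_snd.comp (analyticAt_snd.comp hγ))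
  have htγ : Tendsto γ (𝓝[≠] (0:ℝ)) (𝓝 S) := by
    have h := hγ.continuousAt.tendsto
    rw [hγ0] at h
    exact h.mono_left nhdsWithin_le_nhds
  have ht1 : Tendsto (fun u => (γ u).1) (𝓝[≠] (0:ℝ)) (𝓝 S.1) :=
    (continuous_fst.tendsto S).comp htγ
  have ht2 : Tendsto (fun u => (γ u).2.1) (𝓝[≠] (0:ℝ)) (𝓝 S.2.1) :=
    ((continuous_fst.comp continuous_snd).tendsto S).comp htγ
  have ht3 : Tendsto (fun u => (γ u).2.2.1) (𝓝[≠] (0:ℝ)) (𝓝 S.2.2.1) :=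
    ((continuous_fst.comp (continuous_snd.comp continuous_snd)).tendsto S).comp htγ
  have ht4 : Tendsto (fun u => (γ u).2.2.2) (𝓝[≠] (0:ℝ)) (𝓝 S.2.2.2) :=
    ((continuous_snd.comp (continuous_snd.comp continuous_snd)).tendsto S).comp htγ
  have hne : ∀ᶠ u in 𝓝[≠] (0:ℝ),
      (γ u).2.1 ≠ 0 ∧ (γ u).2.2.1 ≠ 0 ∧ (γ u).2.2.2 ≠ 0 := by
    filter_upwards [hevIoo, eventually_mem_nhdsWithin] with u hu hu0
    exact hne' u hu hu0
  -- limit of Vext and of V ∘ γ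
  have hle : (𝓝[≠] (0:ℝ)) ≤ 𝓝[Set.Ioo (-ε) ε] 0 := by
    have h1 : 𝓝[Set.Ioo (-ε) ε ∩ {(0:ℝ)}ᶜ] 0 = 𝓝[{(0:ℝ)}ᶜ] 0 :=
      nhdsWithin_inter_of_mem (mem_nhdsWithin_of_mem_nhds hIoo)
    rw [← h1]
    exact nhdsWithin_mono _ Set.inter_subset_left
  have hVt : Tendsto Vext (𝓝[≠] (0:ℝ)) (𝓝 (Vext 0)) := (hVc 0 h0mem).mono_left hle
  have hVveq : Vext =ᶠ[𝓝[≠] (0:ℝ)] fun u => Vv (γ u) := by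
    filter_upwards [hevIoo, eventually_mem_nhdsWithin] with u hu hu0
    exact hVeq u hu hu0
  have hVv : Tendsto (fun u => Vv (γ u)) (𝓝[≠] (0:ℝ)) (𝓝 (Vext 0)) := hVt.congr' hVveq
  have hV1 : Tendsto (fun u => V1 (γ u).1 (γ u).2.1 (γ u).2.2.1 (γ u).2.2.2)
      (𝓝[≠] (0:ℝ)) (𝓝 (Vext 0).1) := (continuous_fst.tendsto (Vext 0)).comp hVv
  have hV2 : Tendsto (fun u => V2 (γ u).1 (γ u).2.1 (γ u).2.2.1 (γ u).2.2.2)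
      (𝓝[≠] (0:ℝ)) (𝓝 (Vext 0).2.1) :=
    ((continuous_fst.comp continuous_snd).tendsto (Vext 0)).comp hVv
  have hV3 : Tendsto (fun u => V3 (γ u).1 (γ u).2.1 (γ u).2.2.1 (γ u).2.2.2)
      (𝓝[≠] (0:ℝ)) (𝓝 (Vext 0).2.2.1) :=
    ((continuous_fst.comp (continuous_snd.comp continuous_snd)).tendsto (Vext 0)).comp hVv
  have hV4 : Tendsto (fun u => V4 (γ u).1 (γ u).2.1 (γ u).2.2.1 (γ u).2.2.2)
      (𝓝[≠] (0:ℝ)) (𝓝 (Vext 0).2.2.2) :=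
    ((continuous_snd.comp (continuous_snd.comp continuous_snd)).tendsto (Vext 0)).comp hVv
  -- inner product limit
  have hip : Tendsto (fun u => ipVS (γ u).1 (γ u).2.1 (γ u).2.2.1 (γ u).2.2.2)
      (𝓝[≠] (0:ℝ)) (𝓝 ((Vext 0).1 * S.1 + (Vext 0).2.1 * S.2.1 +
        (Vext 0).2.2.1 * S.2.2.1 + (Vext 0).2.2.2 * S.2.2.2)) :=
    (((hV1.mul ht1).add (hV2.mul ht2)).add (hV3.mul ht3)).add (hV4.mul ht4)
  set lam : ℝ := (Vext 0).1 * S.1 + (Vext 0).2.1 * S.2.1 +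
        (Vext 0).2.2.1 * S.2.2.1 + (Vext 0).2.2.2 * S.2.2.2 with hlam
  -- W component limits
  have hW1 : Tendsto (fun u => W1 (γ u).1 (γ u).2.1 (γ u).2.2.1 (γ u).2.2.2)
      (𝓝[≠] (0:ℝ)) (𝓝 0) := by
    have h := (continuous_fst.tendsto (0 : ℝ × ℝ × ℝ × ℝ)).comp hW
    exact h
  have hW2 : Tendsto (fun u => W2 (γ u).1 (γ u).2.1 (γ u).2.2.1 (γ u).2.2.2)
      (𝓝[≠] (0:ℝ)) (𝓝 0) := by
    have h := ((continuous_fst.comp continuous_snd).tendsto (0 : ℝ × ℝ × ℝ × ℝ)).comp hW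
    exact h
  have hW3 : Tendsto (fun u => W3 (γ u).1 (γ u).2.1 (γ u).2.2.1 (γ u).2.2.2)
      (𝓝[≠] (0:ℝ)) (𝓝 0) := by
    have h := ((continuous_fst.comp (continuous_snd.comp continuous_snd)).tendsto
      (0 : ℝ × ℝ × ℝ × ℝ)).comp hW
    exact h
  have hW4 : Tendsto (fun u => W4 (γ u).1 (γ u).2.1 (γ u).2.2.1 (γ u).2.2.2)
      (𝓝[≠] (0:ℝ)) (𝓝 0) := by
    have h := ((continuous_snd.comp (continuous_snd.comp continuous_snd)).tendsto
      (0 : ℝ × ℝ × ℝ × ℝ)).comp hW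
    exact h
  have e1 : (Vext 0).1 = lam * S.1 := by
    have h := tendsto_nhds_unique (hV1.sub (hip.mul ht1)) hW1
    linarith
  have e2 : (Vext 0).2.1 = lam * S.2.1 := by
    have h := tendsto_nhds_unique (hV2.sub (hip.mul ht2)) hW2
    linarith
  have e3 : (Vext 0).2.2.1 = lam * S.2.2.1 := by
    have h := tendsto_nhds_unique (hV3.sub (hip.mul ht3)) hW3
    linarith
  have e4 : (Vext 0).2.2.2 = lam * S.2.2.2 := by
    have h := tendsto_nhds_unique (hV4.sub (hip.mul ht4)) hW4
    linarith
  exact key_s15 (fun u => (γ u).1) (fun u => (γ u).2.1) (fun u => (γ u).2.2.1)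
    (fun u => (γ u).2.2.2) S.1 S.2.1 S.2.2.1 S.2.2.2 lam
    (Vext 0).1 (Vext 0).2.1 (Vext 0).2.2.1 (Vext 0).2.2.2
    hsph hBCD han2 han3 han4 (congrArg (fun p => p.2.1) hγ0) (congrArg (fun p => p.2.2.1) hγ0)
    (congrArg (fun p => p.2.2.2) hγ0)
    ht1 ht2 ht3 ht4 hne hV1 hV2 hV3 hV4 e1 e2 e3 e4
end

section
/- Let $S=(\alpha_1,\alpha_2,\alpha_3,\alpha_4)\in\mathbb{R}^4$ with $|S|=1$, all components $\alpha_1,\alpha_2,\alpha_3,\alpha_4$ nonzero, and suppose $G_1(S):=\alpha_2\alpha_4-\alpha_1\alpha_3=0$. Then the derivative of $G_1$ along the vector field $W$ satisfies $\alpha_4 W_2(S)+\alpha_2 W_4(S)-\alpha_3 W_1(S)-\alpha_1 W_3(S)=-\dfrac{2}{\alpha_2}\,G_2(S)$, where $G_2(S)=\alpha_1\alpha_4-\alpha_2\alpha_3$. -/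
/-- at a unit vector with all components nonzero lying on the level set
`G₁ = α₂α₄ - α₁α₃ = 0`, the derivative of `G₁` along `W` equals `-(2/α₂) G₂`,
where `G₂ = α₁α₄ - α₂α₃`. -/
theorem statement16 (a1 a2 a3 a4 : ℝ)
    (hnorm : a1^2 + a2^2 + a3^2 + a4^2 = 1)
    (h1 : a1 ≠ 0) (h2 : a2 ≠ 0) (h3 : a3 ≠ 0) (h4 : a4 ≠ 0)
    (hG1 : a2 * a4 - a1 * a3 = 0) :
    a4 * W2 a1 a2 a3 a4 + a2 * W4 a1 a2 a3 a4
      - a3 * W1 a1 a2 a3 a4 - a1 * W3 a1 a2 a3 a4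
      = -(2 / a2) * (a1 * a4 - a2 * a3) := by
  have ha4 : a4 = a1 * a3 / a2 := by
    field_simp
    linarith [hG1]
  subst ha4
  unfold W1 W2 W3 W4 V1 V2 V3 V4 ipVS
  field_simp
  ring
end

section
/- Let $S=(\alpha_1,\alpha_2,\alpha_3,\alpha_4)\in\mathbb{R}^4$ with $|S|=1$, $\alpha_2\neq 0$, $\alpha_4\neq 0$, and suppose $\alpha_3=\alpha_4$ (so that $F_5(S):=\alpha_4^2-\alpha_3^2=0$). Then the derivative of $F_5$ along the vector field $W$ satisfies $2\alpha_4 W_4(S)-2\alpha_3 W_3(S)=\alpha_1-\alpha_2=\dfrac{G_2(S)}{\alpha_4}$, where $G_2(S)=\alpha_1\alpha_4-\alpha_2\alpha_3$. In particular, when $\alpha_4>0$ this derivative is nonnegative if and only if $G_2(S)\geq 0$, and it vanishes exactly when $\alpha_1=\alpha_2$. -/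
/-- at a unit vector with `α₂, α₄ ≠ 0` and `α₃ = α₄` (i.e. on the
level set `F₅ = α₄² - α₃² = 0`), the derivative of `F₅` along `W` equals
`α₁ - α₂ = G₂/α₄`; in particular, when `α₄ > 0` it is nonnegative iff `G₂ ≥ 0`,
and it vanishes exactly when `α₁ = α₂`. -/
theorem statement18 (a1 a2 a3 a4 : ℝ)
    (hnorm : a1^2 + a2^2 + a3^2 + a4^2 = 1)
    (h2 : a2 ≠ 0) (h4 : a4 ≠ 0) (h34 : a3 = a4) :
    (2 * a4 * W4 a1 a2 a3 a4 - 2 * a3 * W3 a1 a2 a3 a4 = a1 - a2) ∧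
    (a1 - a2 = (a1 * a4 - a2 * a3) / a4) ∧
    (0 < a4 →
      ((0 ≤ 2 * a4 * W4 a1 a2 a3 a4 - 2 * a3 * W3 a1 a2 a3 a4 ↔
        0 ≤ a1 * a4 - a2 * a3) ∧
       (2 * a4 * W4 a1 a2 a3 a4 - 2 * a3 * W3 a1 a2 a3 a4 = 0 ↔ a1 = a2))) := by
  subst h34
  have key : 2 * a3 * W4 a1 a2 a3 a3 - 2 * a3 * W3 a1 a2 a3 a3 = a1 - a2 := by
    unfold W3 W4 ipVS V1 V2 V3 V4
    field_simp
    ring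
  refine ⟨key, ?_, ?_⟩
  · field_simp
  · intro hpos
    refine ⟨?_, ?_⟩
    · rw [key]
      constructor
      · intro h; nlinarith
      · intro h; nlinarith
    · rw [key]
      constructor
      · intro h; linarith
      · intro h; linarith
end

section
/- Let $S=(\alpha_1,\alpha_2,\alpha_3,\alpha_4)\in\mathbb{R}^4$ with $|S|=1$, $\alpha_3\neq 0$, and $\alpha_2=\alpha_4\neq 0$. Then $W_4(S)-W_2(S)=\dfrac{\alpha_1}{\alpha_2}$. In particular, along a solution of $S'=W(S)$, at any point where $\alpha_2=\alpha_4$ one has $\frac{d}{du}(\alpha_4-\alpha_2)=\alpha_1/\alpha_2$, which is strictly positive whenever $\alpha_1$ and $\alpha_2$ have the same sign; hence the set $\{\alpha_4>\alpha_2\}$ cannot be left through the wall $\{\alpha_2=\alpha_4\}$ while $\alpha_1>0$, $\alpha_2>0$. -/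
/-- at a unit vector with `α₃ ≠ 0` and `α₂ = α₄ ≠ 0`, one has
`W₄ - W₂ = α₁/α₂`; in particular this difference is strictly positive whenever
`α₁` and `α₂` have the same sign, so the region `{α₄ > α₂}` cannot be left
through the wall `{α₂ = α₄}` while `α₁ > 0`, `α₂ > 0`. -/
theorem statement19 (a1 a2 a3 a4 : ℝ)
    (hnorm : a1^2 + a2^2 + a3^2 + a4^2 = 1)
    (h3 : a3 ≠ 0) (h24 : a2 = a4) (h2 : a2 ≠ 0) :
    W4 a1 a2 a3 a4 - W2 a1 a2 a3 a4 = a1 / a2 ∧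
    (0 < a1 * a2 → 0 < W4 a1 a2 a3 a4 - W2 a1 a2 a3 a4) := by
  have key : W4 a1 a2 a3 a4 - W2 a1 a2 a3 a4 = a1 / a2 := by
    subst h24
    simp only [W4, W2, V1, V2, V3, V4, ipVS]
    field_simp
    ring_nf
  refine ⟨key, fun h => ?_⟩
  rw [key]
  exact div_pos_iff.mpr (by rcases mul_pos_iff.mp h with ⟨ha,hb⟩|⟨ha,hb⟩ <;> [left; right] <;> exact ⟨ha, hb⟩)
end
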